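/- arXiv:1005.2560 — 6 statements merged into one kernel-verified Lean document; each statement's English description precedes it below -/
import Mathlib

section
/- Let Γ be a finite connected graph with vertex set V of at least 2 vertices, with all vertex degrees at most k, let 1 ≤ p < ∞ and 0 < ε < 1, and assume ρ_ε(Γ) > 0. Then λ₁^{(p)}(Γ) ≤ (k/(1−ε)) · (2/ρ_ε(Γ))^p · (c_{(p)}(Γ)/δ(Γ))^p. -/
noncomputable section
open scoped ENNReal

/-- The simple graph underlying a finite graph with symmetric edge multiplicities `ω`:
distinct vertices are adjacent iff they are joined by at least one edge. -/
def multGraph {V : Type*} (ω : V → V → ℕ) : SimpleGraph V where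
  Adj x y := x ≠ y ∧ 1 ≤ ω x y ∧ 1 ≤ ω y x
  symm := by
    constructor
    rintro x y ⟨h1, h2, h3⟩
    exact ⟨h1.symm, h3, h2⟩
  loopless := ⟨fun x h => h.1 rfl⟩

/-- The shortest-path metric of the graph with edge multiplicities `ω`, as a real number. -/
def multDist {V : Type*} (ω : V → V → ℕ) (x y : V) : ℝ :=
  ((multGraph ω).dist x y : ℝ)

/-- The diameter `δ(A)` of a subset `A` of a finite metric space `(X, d)`. -/
def setDiam {X : Type*} (d : X → X → ℝ) (A : Set X) : ℝ :=
  sSup {r : ℝ | ∃ x ∈ A, ∃ y ∈ A, r = d x y}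

/-- The diameter `δ(X)` of a finite metric space `(X, d)`. -/
def spaceDiam (X : Type*) (d : X → X → ℝ) : ℝ :=
  sSup {r : ℝ | ∃ x y : X, r = d x y}

/-- The volume distribution constant `ρ_ε(X)` of a finite metric space `(X, d)`:
the minimum of `δ(A)/δ(X)` over subsets `A` with `|A| ≥ ε|X|`. -/
def volumeDistribution (X : Type*) [Fintype X] (d : X → X → ℝ) (ε : ℝ) : ℝ :=
  sInf {r : ℝ | ∃ A : Finset X, ε * (Fintype.card X : ℝ) ≤ (A.card : ℝ) ∧
    r = setDiam d (A : Set X) / spaceDiam X d}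

/-- The first positive eigenvalue `λ₁^{(p)}` of the discrete `p`-Laplacian of the finite graph
with edge multiplicities `ω`, defined via the variational characterization (3). -/
def lambdaOne {V : Type*} [Fintype V] (ω : V → V → ℕ) (p : ℝ) : ℝ :=
  sInf {r : ℝ | ∃ f : V → ℝ, (¬ ∀ x y : V, f x = f y) ∧
    r = (∑ x : V, ∑ y : V, |f x - f y| ^ p * (ω x y : ℝ)) /
        (⨅ α : ℝ, ∑ x : V, |f x - α| ^ p)}

/-- The `ℓ_p`-distortion `c_{(p)}(X)` of a finite metric space `(X, d)`: the infimum over all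
injective `1`-Lipschitz maps `F : X → ℓ_p(ℕ)` of `L_F = max_{x ≠ y} d(x,y)/‖F x − F y‖`. -/
def lpDistortion (X : Type*) [Fintype X] (d : X → X → ℝ) (p : ℝ≥0∞) : ℝ :=
  sInf {L : ℝ | ∃ F : X → lp (fun _ : ℕ => ℝ) p, Function.Injective F ∧
    (∀ x y : X, ‖F x - F y‖ ≤ d x y) ∧
    L = sSup {r : ℝ | ∃ x y : X, x ≠ y ∧ r = d x y / ‖F x - F y‖}}

/-!
Fix an injective `1`-Lipschitz map `F : V → ℓ_p` with distortion `L` and put `r = ρδ/(2L)`.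
Vertices whose images lie in a common ball of radius `r` are at distance `< 2rL = ρδ`, so each
such ball holds the images of fewer than `ε|V|` vertices; hence `∑ₓ ‖F x - α‖^p ≥ (1-ε)|V| r^p`
for every centre `α`. Adjacent vertices have images at distance `≤ 1`, so the `ω`-weighted
energy of `F` is at most `k|V|`. Both quantities split over the coordinates of `ℓ_p` (the optimal
centre is chosen coordinatewise), so one coordinate of `F` is a real test function with Rayleigh
quotient at most `k / ((1-ε) r^p)`. Letting `L` decrease to `c_{(p)}` gives the bound.
-/

open Finset Function

section GraphMetric

variable {V : Type*} {ω : V → V → ℕ}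

lemma multDist_nonneg (ω : V → V → ℕ) (x y : V) : 0 ≤ multDist ω x y := Nat.cast_nonneg _

lemma multDist_self (ω : V → V → ℕ) (x : V) : multDist ω x x = 0 := by
  simp [multDist]

lemma one_le_multDist (hconn : (multGraph ω).Connected) {x y : V} (hxy : x ≠ y) :
    1 ≤ multDist ω x y := by
  unfold multDist
  exact_mod_cast hconn.pos_dist_of_ne hxy

lemma multDist_eq_one {x y : V} (hxy : x ≠ y) (hω : ω x y ≠ 0) (hω' : ω y x ≠ 0) :
    multDist ω x y = 1 := by
  unfold multDist
  have hadj : (multGraph ω).Adj x y :=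
    ⟨hxy, Nat.one_le_iff_ne_zero.mpr hω, Nat.one_le_iff_ne_zero.mpr hω'⟩
  exact_mod_cast SimpleGraph.dist_eq_one_iff_adj.mpr hadj

end GraphMetric

section FiniteMetricSpace

variable {X : Type*} {d : X → X → ℝ}

lemma setDiam_nonneg (hd : ∀ x y, 0 ≤ d x y) (A : Set X) : 0 ≤ setDiam d A :=
  Real.sSup_nonneg (by rintro _ ⟨x, -, y, -, rfl⟩; exact hd x y)

variable [Fintype X]

lemma le_spaceDiam (d : X → X → ℝ) (x y : X) : d x y ≤ spaceDiam X d :=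
  le_csSup ((Set.finite_range fun z : X × X => d z.1 z.2).subset
    (by rintro _ ⟨x, y, rfl⟩; exact ⟨(x, y), rfl⟩)).bddAbove ⟨x, y, rfl⟩

lemma setDiam_lt {A : Set X} {M : ℝ} (hM : 0 < M) (h : ∀ x ∈ A, ∀ y ∈ A, d x y < M) :
    setDiam d A < M := by
  unfold setDiam
  rcases Set.eq_empty_or_nonempty {r : ℝ | ∃ x ∈ A, ∃ y ∈ A, r = d x y} with hS | hS
  · rwa [hS, Real.sSup_empty]
  have hfin : {r : ℝ | ∃ x ∈ A, ∃ y ∈ A, r = d x y}.Finite :=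
    (Set.finite_range fun z : X × X => d z.1 z.2).subset
      (by rintro _ ⟨x, -, y, -, rfl⟩; exact ⟨(x, y), rfl⟩)
  rw [hfin.csSup_lt_iff hS]
  rintro _ ⟨x, hx, y, hy, rfl⟩
  exact h x hx y hy

lemma card_lt_of_setDiam_lt (hd : ∀ x y, 0 ≤ d x y) (hδ : 0 < spaceDiam X d) {ε : ℝ}
    {A : Finset X} (hA : setDiam d A < volumeDistribution X d ε * spaceDiam X d) :
    (#A : ℝ) < ε * Fintype.card X := by
  by_contra! hcard
  have hρ : volumeDistribution X d ε ≤ setDiam d A / spaceDiam X d :=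
    csInf_le ⟨0, by rintro _ ⟨B, -, rfl⟩; exact div_nonneg (setDiam_nonneg hd _) hδ.le⟩
      ⟨A, hcard, rfl⟩
  rw [le_div_iff₀ hδ] at hρ
  linarith

lemma mul_rpow_le_sum_norm_sub_rpow {E : Type*} [SeminormedAddCommGroup E]
    (hd : ∀ x y, 0 ≤ d x y) (hδ : 0 < spaceDiam X d) {ε L r p : ℝ} (hL : 0 < L) (hr : 0 < r)
    (hp : 0 ≤ p) (hrL : 2 * r * L ≤ volumeDistribution X d ε * spaceDiam X d) {F : X → E}
    (hF : ∀ x y, d x y ≤ L * ‖F x - F y‖) (α : E) :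
    (1 - ε) * Fintype.card X * r ^ p ≤ ∑ x, ‖F x - α‖ ^ p := by
  classical
  set A := univ.filter fun x => ‖F x - α‖ < r
  set B := univ.filter fun x => ¬ ‖F x - α‖ < r
  have hA : (#A : ℝ) < ε * Fintype.card X := by
    refine card_lt_of_setDiam_lt hd hδ (setDiam_lt (by nlinarith) fun x hx y hy => ?_)
    simp only [A, coe_filter, mem_univ, true_and, Set.mem_ofPred_eq] at hx hy
    calc d x y ≤ L * ‖F x - F y‖ := hF x y
      _ ≤ L * (‖F x - α‖ + ‖F y - α‖) := by
          gcongr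
          simpa only [norm_sub_rev α] using norm_sub_le_norm_sub_add_norm_sub (F x) α (F y)
      _ < L * (2 * r) := by gcongr; linarith
      _ ≤ _ := by linarith
  have hAB : (#A : ℝ) + #B = Fintype.card X := by
    exact_mod_cast card_filter_add_card_filter_not (s := univ) _
  calc (1 - ε) * Fintype.card X * r ^ p ≤ #B * r ^ p := by gcongr; linarith
    _ = ∑ _x ∈ B, r ^ p := by rw [sum_const, nsmul_eq_mul]
    _ ≤ ∑ x ∈ B, ‖F x - α‖ ^ p :=
        sum_le_sum fun x hx => Real.rpow_le_rpow hr.le (not_lt.mp (mem_filter.mp hx).2) hp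
    _ ≤ ∑ x, ‖F x - α‖ ^ p :=
        sum_le_sum_of_subset_of_nonneg (subset_univ B) fun _ _ _ => by positivity

end FiniteMetricSpace

/-- `lpDistortion X d q` is the infimum of this over injective `1`-Lipschitz `F : X → ℓ_q`. -/
def embeddingDistortion {X E : Type*} [Norm E] [Sub E] (d : X → X → ℝ) (F : X → E) : ℝ :=
  sSup {r : ℝ | ∃ x y : X, x ≠ y ∧ r = d x y / ‖F x - F y‖}

section Distortion

variable {X E : Type*} [NormedAddCommGroup E] {d : X → X → ℝ} {F : X → E}

lemma embeddingDistortion_nonneg (hd : ∀ x y, 0 ≤ d x y) (F : X → E) :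
    0 ≤ embeddingDistortion d F :=
  Real.sSup_nonneg (by rintro _ ⟨x, y, -, rfl⟩; exact div_nonneg (hd x y) (norm_nonneg _))

variable [Fintype X]

lemma lpDistortion_nonneg (hd : ∀ x y, 0 ≤ d x y) (q : ℝ≥0∞) [Fact (1 ≤ q)] :
    0 ≤ lpDistortion X d q :=
  Real.sInf_nonneg fun _ ⟨F, _, _, hL⟩ => hL ▸ embeddingDistortion_nonneg hd F

lemma le_embeddingDistortion_mul_norm (hF : Injective F) {x y : X} (hxy : x ≠ y) :
    d x y ≤ embeddingDistortion d F * ‖F x - F y‖ := by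
  rw [← div_le_iff₀ (norm_pos_iff.mpr (sub_ne_zero.mpr (hF.ne hxy)))]
  refine le_csSup ?_ ⟨x, y, hxy, rfl⟩
  exact ((Set.finite_range fun z : X × X => d z.1 z.2 / ‖F z.1 - F z.2‖).subset
    (by rintro _ ⟨x, y, -, rfl⟩; exact ⟨(x, y), rfl⟩)).bddAbove

lemma embeddingDistortion_pos [Nontrivial X] (hd : ∀ x y, x ≠ y → 0 < d x y) (hF : Injective F) :
    0 < embeddingDistortion d F := by
  obtain ⟨x, y, hxy⟩ := exists_pair_ne X
  have h := (hd x y hxy).trans_le (le_embeddingDistortion_mul_norm hF hxy)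
  exact pos_of_mul_pos_left h (norm_nonneg _)

lemma exists_injective_lp_le (hd : ∀ x y, x ≠ y → 1 ≤ d x y) (hd₀ : ∀ x, 0 ≤ d x x)
    (q : ℝ≥0∞) [Fact (1 ≤ q)] :
    ∃ F : X → lp (fun _ : ℕ => ℝ) q, Injective F ∧ ∀ x y, ‖F x - F y‖ ≤ d x y := by
  -- number the points and put `x` at `index x / |X| ∈ [0, 1)` on the first axis
  set t : X → ℝ := fun x => (Fintype.equivFin X x : ℕ) / Fintype.card X
  have ht : ∀ x, 0 ≤ t x ∧ t x < 1 := fun x => by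
    have hlt : ((Fintype.equivFin X x : ℕ) : ℝ) < Fintype.card X := by exact_mod_cast (Fin.isLt _)
    exact ⟨by positivity, (div_lt_one ((Nat.cast_nonneg _).trans_lt hlt)).mpr hlt⟩
  have hq : 0 < q := zero_lt_one.trans_le Fact.out
  refine ⟨fun x => lp.single q 0 (t x), fun x y hxy => ?_, fun x y => ?_⟩
  · have h := congrArg (fun f : lp (fun _ : ℕ => ℝ) q => f 0) hxy
    simp only [lp.single_apply_self, t] at h
    have : Nonempty X := ⟨x⟩
    have hcard : (Fintype.card X : ℝ) ≠ 0 := Nat.cast_ne_zero.mpr Fintype.card_ne_zero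
    rw [div_left_inj' hcard, Nat.cast_inj, Fin.val_inj] at h
    exact (Fintype.equivFin X).injective h
  · rw [← lp.single_sub, lp.norm_single hq, Real.norm_eq_abs]
    rcases eq_or_ne x y with rfl | hxy
    · simpa using hd₀ x
    · refine le_trans ?_ (hd x y hxy)
      rw [abs_le]
      constructor <;> linarith [ht x, ht y]

end Distortion

lemma le_mul_rpow_csInf {S : Set ℝ} (hS : S.Nonempty) (hS₀ : ∀ L ∈ S, 0 ≤ L) {K p t : ℝ}
    (hK : 0 ≤ K) (hp : 0 < p) (h : ∀ L ∈ S, t ≤ K * L ^ p) : t ≤ K * sInf S ^ p := by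
  obtain ⟨L₀, hL₀⟩ := hS
  rcases le_or_gt t 0 with ht | ht
  · exact ht.trans (mul_nonneg hK (Real.rpow_nonneg (Real.sInf_nonneg hS₀) _))
  have hK : 0 < K := hK.lt_of_ne (by rintro rfl; linarith [h L₀ hL₀])
  have hroot : (t / K) ^ p⁻¹ ≤ sInf S :=
    le_csInf ⟨L₀, hL₀⟩ fun L hL => (Real.rpow_inv_le_iff_of_pos (by positivity) (hS₀ L hL) hp).mpr
      ((div_le_iff₀' hK).mpr (h L hL))
  rwa [Real.rpow_inv_le_iff_of_pos (by positivity) (Real.sInf_nonneg hS₀) hp, div_le_iff₀' hK]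
    at hroot

lemma exists_div_le_tsum_div {a b : ℕ → ℝ} (ha : ∀ n, 0 ≤ a n) (hb : ∀ n, 0 ≤ b n)
    (hsa : Summable a) (hB : 0 < ∑' n, b n) :
    ∃ n, 0 < b n ∧ a n / b n ≤ (∑' n, a n) / ∑' n, b n := by
  by_contra! hcon
  obtain ⟨n₀, hn₀⟩ : ∃ n, 0 < b n := by
    by_contra! h
    exact hB.not_ge (tsum_nonpos h)
  have hcross : ∀ n, (∑' n, a n) * b n ≤ a n * ∑' n, b n := fun n => by
    rcases (hb n).eq_or_lt with h | h
    · rw [← h, mul_zero]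
      exact mul_nonneg (ha n) hB.le
    · exact ((div_lt_div_iff₀ hB h).mp (hcon n h)).le
  have hstrict : (∑' n, a n) * b n₀ < a n₀ * ∑' n, b n := (div_lt_div_iff₀ hB hn₀).mp (hcon n₀ hn₀)
  have : (∑' n, a n) * ∑' n, b n < (∑' n, a n) * ∑' n, b n :=
    calc (∑' n, a n) * ∑' n, b n = ∑' n, (∑' n, a n) * b n := tsum_mul_left.symm
      _ < ∑' n, a n * ∑' n, b n :=
          Summable.tsum_lt_tsum_of_nonneg (fun n => mul_nonneg (tsum_nonneg ha) (hb n)) hcross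
            hstrict (hsa.mul_right _)
      _ = (∑' n, a n) * ∑' n, b n := tsum_mul_right
  exact this.false

section RayleighQuotient

variable {V : Type*} [Fintype V]

lemma bddBelow_range_sum_abs_sub_rpow (f : V → ℝ) (p : ℝ) :
    BddBelow (Set.range fun α : ℝ => ∑ x, |f x - α| ^ p) :=
  ⟨0, by rintro _ ⟨α, rfl⟩; positivity⟩

lemma exists_forall_sum_abs_sub_rpow_le [Nonempty V] (f : V → ℝ) {p : ℝ} (hp : 0 ≤ p) :
    ∃ β, (∃ z, |β| ≤ |f z|) ∧ ∀ α, ∑ x, |f x - β| ^ p ≤ ∑ x, |f x - α| ^ p := by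
  obtain ⟨xm, -, hxm⟩ := univ.exists_min_image f univ_nonempty
  obtain ⟨xM, -, hxM⟩ := univ.exists_max_image f univ_nonempty
  have hI : f xm ≤ f xM := hxm xM (mem_univ _)
  have hg : Continuous fun β : ℝ => ∑ x, |f x - β| ^ p := by
    fun_prop (disch := exact hp)
  obtain ⟨β, hβ, hmin⟩ :=
    isCompact_Icc.exists_isMinOn (Set.nonempty_Icc.mpr hI) hg.continuousOn
  refine ⟨β, ?_, fun α => ?_⟩
  · rcases le_max_iff.mp (abs_le_max_abs_abs hβ.1 hβ.2) with h | h
    exacts [⟨xm, h⟩, ⟨xM, h⟩]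
  -- projecting `α` onto `[min f, max f]` brings it closer to every value of `f`
  refine (hmin (Set.projIcc _ _ hI α).2).trans (sum_le_sum fun x _ => ?_)
  have hx : f x ∈ Set.Icc (f xm) (f xM) := ⟨hxm x (mem_univ _), hxM x (mem_univ _)⟩
  have h := Set.abs_projIcc_sub_projIcc hI (c := f x) (d := α)
  rw [Set.projIcc_of_mem hI hx] at h
  exact Real.rpow_le_rpow (abs_nonneg _) (by simpa only [abs_sub_comm] using h) hp

variable (ω : V → V → ℕ)

lemma lambdaOne_le [Nonempty V] {p : ℝ} (hp : p ≠ 0) (f : V → ℝ)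
    (hf : 0 < ⨅ α, ∑ x, |f x - α| ^ p) :
    lambdaOne ω p ≤
      (∑ x, ∑ y, |f x - f y| ^ p * (ω x y : ℝ)) / ⨅ α, ∑ x, |f x - α| ^ p := by
  have hnc : ¬ ∀ x y, f x = f y := by
    intro hconst
    obtain ⟨x₀⟩ := ‹Nonempty V›
    have h := ciInf_le (bddBelow_range_sum_abs_sub_rpow f p) (f x₀)
    have h₀ : ∑ x, |f x - f x₀| ^ p = 0 :=
      sum_eq_zero fun x _ => by rw [hconst x x₀, sub_self, abs_zero, Real.zero_rpow hp]
    linarith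
  refine csInf_le ⟨0, ?_⟩ ⟨f, hnc, rfl⟩
  rintro _ ⟨g, -, rfl⟩
  exact div_nonneg (by positivity) (Real.iInf_nonneg fun α => by positivity)

variable {q : ℝ≥0∞}

lemma hasSum_abs_sub_rpow (hq : 0 < q.toReal) (f g : lp (fun _ : ℕ => ℝ) q) :
    HasSum (fun n => |f n - g n| ^ q.toReal) (‖f - g‖ ^ q.toReal) := by
  simpa only [lp.coeFn_sub, Pi.sub_apply, Real.norm_eq_abs] using lp.hasSum_norm hq (f - g)

/-- Splitting both sums over the coordinates of `ℓ_q`, some coordinate of `F` does at least as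
well as `F` itself. -/
lemma lambdaOne_le_of_forall_le_sum_norm_sub_rpow [Nonempty V] (hp : 0 < q.toReal)
    (F : V → lp (fun _ : ℕ => ℝ) q) {D : ℝ} (hD : 0 < D)
    (hF : ∀ α, D ≤ ∑ x, ‖F x - α‖ ^ q.toReal) :
    lambdaOne ω q.toReal ≤ (∑ x, ∑ y, ‖F x - F y‖ ^ q.toReal * (ω x y : ℝ)) / D := by
  set p := q.toReal
  set a : ℕ → ℝ := fun n => ∑ x, ∑ y, |F x n - F y n| ^ p * (ω x y : ℝ)
  set b : ℕ → ℝ := fun n => ⨅ α, ∑ x, |F x n - α| ^ p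
  choose β hβ hβmin using fun n => exists_forall_sum_abs_sub_rpow_le (fun x => F x n) hp.le
  have hb : b = fun n => ∑ x, |F x n - β n| ^ p := funext fun n =>
    le_antisymm (ciInf_le (bddBelow_range_sum_abs_sub_rpow _ p) _) (le_ciInf (hβmin n))
  have hβmem : Memℓp β q := by
    refine memℓp_gen (Summable.of_nonneg_of_le (f := fun n => ∑ x, ‖F x n‖ ^ p)
      (fun n => by positivity) (fun n => ?_)
      (summable_sum (s := univ) fun x _ => (lp.hasSum_norm hp (F x)).summable))
    obtain ⟨z, hz⟩ := hβ n
    calc ‖β n‖ ^ p ≤ ‖F z n‖ ^ p := Real.rpow_le_rpow (norm_nonneg _) hz hp.le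
      _ ≤ ∑ x, ‖F x n‖ ^ p :=
          single_le_sum (f := fun x => ‖F x n‖ ^ p) (fun x _ => by positivity) (mem_univ z)
  have ha : HasSum a (∑ x, ∑ y, ‖F x - F y‖ ^ p * (ω x y : ℝ)) :=
    hasSum_sum fun x _ => hasSum_sum fun y _ => (hasSum_abs_sub_rpow hp _ _).mul_right _
  have hbsum : HasSum b (∑ x, ‖F x - ⟨β, hβmem⟩‖ ^ p) := by
    rw [hb]
    exact hasSum_sum fun x _ => hasSum_abs_sub_rpow hp (F x) ⟨β, hβmem⟩
  obtain ⟨n, hbn, hn⟩ := exists_div_le_tsum_div (fun n => by positivity)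
    (fun n => Real.iInf_nonneg fun α => by positivity) ha.summable
    (hbsum.tsum_eq ▸ hD.trans_le (hF _))
  calc lambdaOne ω p ≤ a n / b n := lambdaOne_le ω hp.ne' _ hbn
    _ ≤ (∑' n, a n) / ∑' n, b n := hn
    _ ≤ _ := by
        rw [ha.tsum_eq, hbsum.tsum_eq]
        exact div_le_div_of_nonneg_left (ha.nonneg fun n => by positivity) hD (hF _)

end RayleighQuotient

section Graph

variable {V : Type*} [Fintype V] {ω : V → V → ℕ}

lemma spaceDiam_multDist_pos [Nontrivial V] (hconn : (multGraph ω).Connected) :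
    0 < spaceDiam V (multDist ω) :=
  let ⟨x, y, hxy⟩ := exists_pair_ne V
  one_pos.trans_le ((one_le_multDist hconn hxy).trans (le_spaceDiam _ x y))

lemma sum_norm_sub_rpow_mul_le (hsymm : ∀ x y, ω x y = ω y x) {k : ℕ}
    (hdeg : ∀ x, ∑ y, ω x y ≤ k) {E : Type*} [SeminormedAddCommGroup E] {F : V → E}
    (hF : ∀ x y, ‖F x - F y‖ ≤ multDist ω x y) {p : ℝ} (hp : 0 ≤ p) :
    ∑ x, ∑ y, ‖F x - F y‖ ^ p * (ω x y : ℝ) ≤ k * Fintype.card V := by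
  have hterm : ∀ x y, ‖F x - F y‖ ^ p * (ω x y : ℝ) ≤ ω x y := fun x y => by
    rcases eq_or_ne (ω x y) 0 with h | h
    · simp [h]
    have hle : ‖F x - F y‖ ≤ 1 := by
      rcases eq_or_ne x y with rfl | hxy
      · simp
      · exact (hF x y).trans (multDist_eq_one hxy h (hsymm x y ▸ h)).le
    exact mul_le_of_le_one_left (Nat.cast_nonneg _) (Real.rpow_le_one (norm_nonneg _) hle hp)
  calc ∑ x, ∑ y, ‖F x - F y‖ ^ p * (ω x y : ℝ) ≤ ∑ x, ∑ y, (ω x y : ℝ) := by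
        gcongr with x _ y _
        exact hterm x y
    _ ≤ ∑ _x : V, (k : ℝ) := by
        gcongr with x
        exact_mod_cast hdeg x
    _ = k * Fintype.card V := by simp [mul_comm]

lemma lambdaOne_le_mul_embeddingDistortion_rpow [Nontrivial V] (hsymm : ∀ x y, ω x y = ω y x)
    (hconn : (multGraph ω).Connected) {k : ℕ} (hdeg : ∀ x, ∑ y, ω x y ≤ k) {ε : ℝ} (hε : ε < 1)
    (hρ : 0 < volumeDistribution V (multDist ω) ε) {q : ℝ≥0∞} [Fact (1 ≤ q)] (hq : 0 < q.toReal)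
    {F : V → lp (fun _ : ℕ => ℝ) q} (hFinj : Injective F)
    (hFlip : ∀ x y, ‖F x - F y‖ ≤ multDist ω x y) :
    lambdaOne ω q.toReal ≤
      (k / (1 - ε) * (2 / volumeDistribution V (multDist ω) ε) ^ q.toReal /
        spaceDiam V (multDist ω) ^ q.toReal) * embeddingDistortion (multDist ω) F ^ q.toReal := by
  set p := q.toReal
  set ρ := volumeDistribution V (multDist ω) ε
  set δ := spaceDiam V (multDist ω)
  set L := embeddingDistortion (multDist ω) F
  have hδ : 0 < δ := spaceDiam_multDist_pos hconn
  have hL : 0 < L :=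
    embeddingDistortion_pos (fun x y hxy => one_pos.trans_le (one_le_multDist hconn hxy)) hFinj
  have hdF : ∀ x y, multDist ω x y ≤ L * ‖F x - F y‖ := fun x y => by
    rcases eq_or_ne x y with rfl | hxy
    · simp [multDist_self]
    · exact le_embeddingDistortion_mul_norm hFinj hxy
  set r := ρ * δ / (2 * L)
  have hr : 0 < r := by positivity
  have hrL : 2 * r * L = ρ * δ := by simp only [r]; field_simp
  have hden := mul_rpow_le_sum_norm_sub_rpow (multDist_nonneg ω) hδ hL hr hq.le hrL.le hdF
  have hN : (0 : ℝ) < Fintype.card V := by exact_mod_cast Fintype.card_pos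
  have h1ε : 0 < 1 - ε := sub_pos.mpr hε
  calc lambdaOne ω p
      ≤ (∑ x, ∑ y, ‖F x - F y‖ ^ p * (ω x y : ℝ)) / ((1 - ε) * Fintype.card V * r ^ p) :=
        lambdaOne_le_of_forall_le_sum_norm_sub_rpow ω hq F (by positivity) hden
    _ ≤ k * Fintype.card V / ((1 - ε) * Fintype.card V * r ^ p) := by
        gcongr
        exact sum_norm_sub_rpow_mul_le hsymm hdeg hFlip hq.le
    _ = _ := by
        simp only [r]
        rw [Real.div_rpow (by positivity) (by positivity), Real.div_rpow (by positivity) hρ.le,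
          Real.mul_rpow hρ.le hδ.le, Real.mul_rpow (by norm_num) hL.le]
        field_simp

end Graph

theorem statement_0_general {V : Type*} [Fintype V] (ω : V → V → ℕ)
    (hsymm : ∀ x y : V, ω x y = ω y x)
    (hconn : (multGraph ω).Connected)
    (hcard : 2 ≤ Fintype.card V)
    (k : ℕ) (hdeg : ∀ x : V, (∑ y : V, ω x y) ≤ k)
    (p : ℝ) (hp : 1 ≤ p)
    (ε : ℝ) (hε1 : ε < 1)
    (hρ : 0 < volumeDistribution V (multDist ω) ε) :
    lambdaOne ω p ≤
      ((k : ℝ) / (1 - ε)) * (2 / volumeDistribution V (multDist ω) ε) ^ p *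
        (lpDistortion V (multDist ω) (ENNReal.ofReal p) / spaceDiam V (multDist ω)) ^ p := by
  have hp₀ : 0 < p := one_pos.trans_le hp
  have : Fact (1 ≤ ENNReal.ofReal p) := ⟨ENNReal.one_le_ofReal.mpr hp⟩
  have hpq : (ENNReal.ofReal p).toReal = p := ENNReal.toReal_ofReal hp₀.le
  have : Nontrivial V := Fintype.one_lt_card_iff_nontrivial.mp hcard
  obtain ⟨F₀, hF₀inj, hF₀lip⟩ := exists_injective_lp_le (fun x y => one_le_multDist hconn)
    (fun x => (multDist_self ω x).ge) (ENNReal.ofReal p)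
  have hbound : lambdaOne ω p ≤ (k / (1 - ε) * (2 / volumeDistribution V (multDist ω) ε) ^ p /
      spaceDiam V (multDist ω) ^ p) * lpDistortion V (multDist ω) (ENNReal.ofReal p) ^ p := by
    refine le_mul_rpow_csInf ?_ ?_ ?_ hp₀ ?_
    · exact ⟨_, F₀, hF₀inj, hF₀lip, rfl⟩
    · exact fun _ ⟨F, _, _, hL⟩ => hL ▸ embeddingDistortion_nonneg (multDist_nonneg ω) F
    · have := sub_pos.mpr hε1
      have := spaceDiam_multDist_pos hconn
      positivity
    rintro _ ⟨F, hFinj, hFlip, rfl⟩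
    have h := lambdaOne_le_mul_embeddingDistortion_rpow hsymm hconn hdeg hε1 hρ
      (by rwa [hpq]) hFinj hFlip
    rwa [hpq] at h
  rw [Real.div_rpow (lpDistortion_nonneg (multDist_nonneg ω) _)
    (spaceDiam_multDist_pos hconn).le]
  convert hbound using 1
  ring

/-- Theorem 3: for a finite connected graph `Γ` on at least two vertices with
degrees at most `k`, `1 ≤ p < ∞`, `0 < ε < 1` and `ρ_ε(Γ) > 0`,
`λ₁^{(p)}(Γ) ≤ (k/(1−ε)) (2/ρ_ε(Γ))^p (c_{(p)}(Γ)/δ(Γ))^p`. -/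
theorem statement_0 {V : Type*} [Fintype V] (ω : V → V → ℕ)
    (hsymm : ∀ x y : V, ω x y = ω y x)
    (hconn : (multGraph ω).Connected)
    (hcard : 2 ≤ Fintype.card V)
    (k : ℕ) (hdeg : ∀ x : V, (∑ y : V, ω x y) ≤ k)
    (p : ℝ) (hp : 1 ≤ p)
    (ε : ℝ) (hε0 : 0 < ε) (hε1 : ε < 1)
    (hρ : 0 < volumeDistribution V (multDist ω) ε) :
    lambdaOne ω p ≤
      ((k : ℝ) / (1 - ε)) * (2 / volumeDistribution V (multDist ω) ε) ^ p *
        (lpDistortion V (multDist ω) (ENNReal.ofReal p) / spaceDiam V (multDist ω)) ^ p :=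
  statement_0_general ω hsymm hconn hcard k hdeg p hp ε hε1 hρ
end
end

section
/- Let V be a nonempty finite set, 1 ≤ p < ∞, and f : V → ℝ. Then there exists α ∈ ℝ such that Σ_{x∈V} |f(x) − α|^p = inf_{β∈ℝ} Σ_{x∈V} |f(x) − β|^p, and moreover |α| ≤ 2 (Σ_{x∈V} |f(x)|^p)^{1/p} / |V|^{1/p}. -/
lemma two_rpow_aux {a b p : ℝ} (ha : 0 ≤ a) (hb : 0 ≤ b) (hp : 1 ≤ p) :
    (a + b) ^ p ≤ 2 ^ (p - 1) * (a ^ p + b ^ p) := by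
  lift a to NNReal using ha
  lift b to NNReal using hb
  have h := NNReal.rpow_add_le_mul_rpow_add_rpow a b hp
  have := (NNReal.coe_le_coe).2 h
  push_cast at this
  simpa using this

/-- For a nonempty finite set `V`, `1 ≤ p < ∞` and `f : V → ℝ`, there is
`α ∈ ℝ` realizing `inf_β Σ_x |f x − β|^p`, with `|α| ≤ 2 (Σ_x |f x|^p)^{1/p} / |V|^{1/p}`. -/
theorem statement_1 {V : Type*} [Fintype V] [Nonempty V] (p : ℝ) (hp : 1 ≤ p)
    (f : V → ℝ) :
    ∃ α : ℝ,
      ((∑ x : V, |f x - α| ^ p) = ⨅ β : ℝ, ∑ x : V, |f x - β| ^ p) ∧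
      |α| ≤ 2 * (∑ x : V, |f x| ^ p) ^ (1 / p) / (Fintype.card V : ℝ) ^ (1 / p) := by
  have hp0 : (0:ℝ) < p := lt_of_lt_of_le one_pos hp
  set g : ℝ → ℝ := fun β => ∑ x : V, |f x - β| ^ p with hgdef
  have hterm_nonneg : ∀ (β : ℝ) (x : V), (0:ℝ) ≤ |f x - β| ^ p :=
    fun β x => Real.rpow_nonneg (abs_nonneg _) _
  have hg_nonneg : ∀ β, 0 ≤ g β := fun β => Finset.sum_nonneg fun x _ => hterm_nonneg β x
  have hcont : Continuous g := by
    apply continuous_finset_sum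
    intro x _
    exact ((continuous_const.sub continuous_id).abs).rpow_const (fun β => Or.inr hp0.le)
  set S : ℝ := ∑ x : V, |f x| ^ p with hSdef
  have hS0 : 0 ≤ S := Finset.sum_nonneg fun x _ => Real.rpow_nonneg (abs_nonneg _) _
  obtain ⟨x0⟩ := (inferInstance : Nonempty V)
  set R : ℝ := (S+1) ^ (1/p) + |f x0| with hRdef
  have hR0 : 0 ≤ R := add_nonneg (Real.rpow_nonneg (by linarith) _) (abs_nonneg _)
  obtain ⟨α, hαmem, hmin⟩ := isCompact_Icc.exists_isMinOn
    (Set.nonempty_Icc.2 (by linarith : -R ≤ R)) hcont.continuousOn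
  have h0mem : (0:ℝ) ∈ Set.Icc (-R) R := by constructor <;> linarith
  have hg0 : g 0 = S := by simp [hgdef, hSdef]
  have hgαS : g α ≤ S := hg0 ▸ hmin h0mem
  clear_value g S R
  have hglobal : ∀ β, g α ≤ g β := by
    intro β
    by_cases hβ : β ∈ Set.Icc (-R) R
    · exact hmin hβ
    · have hβR : R < |β| := by
        by_contra h
        exact hβ (by rw [Set.mem_Icc, ← abs_le]; linarith)
      have h1 : (S+1)^(1/p) ≤ |f x0 - β| := by
        have h2 := abs_sub_abs_le_abs_sub β (f x0)
        rw [abs_sub_comm] at h2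
        linarith
      have h2 : S + 1 ≤ |f x0 - β| ^ p := by
        calc S + 1 = ((S+1)^(1/p))^p := by
              rw [one_div, Real.rpow_inv_rpow (by linarith) hp0.ne']
        _ ≤ _ := Real.rpow_le_rpow (Real.rpow_nonneg (by linarith) _) h1 hp0.le
      have h3 : |f x0 - β| ^ p ≤ g β := by
        rw [hgdef]
        exact Finset.single_le_sum (fun x _ => hterm_nonneg β x) (Finset.mem_univ x0)
      linarith
  have hbdd : BddBelow (Set.range g) := by
    refine ⟨0, ?_⟩
    rintro y ⟨β, rfl⟩
    exact hg_nonneg β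
  have hinf : g α = ⨅ β, g β :=
    le_antisymm (le_ciInf hglobal) (ciInf_le hbdd α)
  refine ⟨α, by simpa only [hgdef] using hinf, ?_⟩
  -- the bound
  have key : ∀ x : V, |α| ^ p ≤ 2 ^ (p-1) * (|f x| ^ p + |f x - α| ^ p) := by
    intro x
    have htri : |α| ≤ |f x| + |f x - α| := by
      have h := abs_sub (f x) (f x - α)
      have : f x - (f x - α) = α := by ring
      rw [this] at h
      exact h
    calc |α| ^ p ≤ (|f x| + |f x - α|) ^ p :=
          Real.rpow_le_rpow (abs_nonneg _) htri hp0.le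
    _ ≤ 2 ^ (p-1) * (|f x| ^ p + |f x - α| ^ p) :=
          two_rpow_aux (abs_nonneg _) (abs_nonneg _) hp
  have hsum : (Fintype.card V : ℝ) * |α| ^ p ≤ 2 ^ p * S := by
    have h1 : ∑ _x : V, |α| ^ p ≤ ∑ x : V, 2 ^ (p-1) * (|f x| ^ p + |f x - α| ^ p) :=
      Finset.sum_le_sum fun x _ => key x
    rw [Finset.sum_const, Finset.card_univ, nsmul_eq_mul] at h1
    have h2 : ∑ x : V, 2 ^ (p-1) * (|f x| ^ p + |f x - α| ^ p)
        = 2 ^ (p-1) * (S + g α) := by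
      rw [← Finset.mul_sum, Finset.sum_add_distrib, hSdef, hgdef]
    have h3 : (2:ℝ) ^ (p-1) * (S + g α) ≤ 2 ^ (p-1) * (2 * S) := by
      apply mul_le_mul_of_nonneg_left (by linarith) (Real.rpow_nonneg (by norm_num) _)
    have h4 : (2:ℝ) ^ (p-1) * (2 * S) = 2 ^ p * S := by
      rw [Real.rpow_sub (by norm_num), Real.rpow_one]
      ring
    calc (Fintype.card V : ℝ) * |α| ^ p ≤ 2 ^ (p-1) * (S + g α) := h2 ▸ h1
    _ ≤ 2 ^ (p-1) * (2 * S) := h3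
    _ = 2 ^ p * S := h4
  have hn0 : (0:ℝ) < (Fintype.card V : ℝ) := by
    exact_mod_cast Fintype.card_pos
  have hαp : |α| ^ p ≤ 2 ^ p * S / (Fintype.card V : ℝ) := by
    rw [le_div_iff₀ hn0]
    linarith [hsum]
  have := Real.rpow_le_rpow (Real.rpow_nonneg (abs_nonneg _) _) hαp
    (by positivity : (0:ℝ) ≤ 1/p)
  rw [one_div, Real.rpow_rpow_inv (abs_nonneg _) hp0.ne'] at this
  calc |α| ≤ (2 ^ p * S / (Fintype.card V : ℝ)) ^ p⁻¹ := this
  _ = 2 * S ^ (1/p) / (Fintype.card V : ℝ) ^ (1/p) := by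
      rw [one_div, Real.div_rpow (by positivity) hn0.le,
        Real.mul_rpow (by positivity) hS0, Real.rpow_rpow_inv (by norm_num) hp0.ne']
end

section
/- Let Γ be a finite connected vertex-transitive simple graph on at least 3 vertices, with vertex set V, shortest-path metric d and diameter δ(Γ). Then every subset A ⊆ V with 2|A| ≥ |V| satisfies 4·δ(A) ≥ δ(Γ), where δ(A) = max_{x,y∈A} d(x,y); equivalently, ρ_{1/2}(Γ) ≥ 1/4. -/
private lemma dist_getVert_left {V : Type*} {G : SimpleGraph V} (hconn : G.Connected) :
    ∀ {u v : V} (p : G.Walk u v) (k : ℕ), G.dist u (p.getVert k) ≤ k := by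
  intro u v p
  induction p with
  | nil =>
    intro k
    rw [SimpleGraph.Walk.getVert_of_length_le _ (by simp : SimpleGraph.Walk.nil.length ≤ k)]
    simp [SimpleGraph.dist_self]
  | cons h q ih =>
    intro k
    cases k with
    | zero => simp
    | succ k =>
      rw [SimpleGraph.Walk.getVert_cons_succ]
      calc G.dist _ _ ≤ G.dist _ _ + G.dist _ _ := hconn.dist_triangle
        _ ≤ 1 + k := by
            gcongr
            · exact (SimpleGraph.dist_le h.toWalk).trans (by simp)
            · exact ih k
        _ = k + 1 := by omega

private lemma dist_getVert_right {V : Type*} {G : SimpleGraph V} :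
    ∀ {u v : V} (p : G.Walk u v) (k : ℕ), G.dist (p.getVert k) v ≤ p.length - k := by
  intro u v p
  induction p with
  | nil =>
    intro k
    rw [SimpleGraph.Walk.getVert_of_length_le _ (by simp : SimpleGraph.Walk.nil.length ≤ k)]
    simp
  | cons h q ih =>
    intro k
    cases k with
    | zero =>
      simpa using SimpleGraph.dist_le (SimpleGraph.Walk.cons h q)
    | succ k =>
      rw [SimpleGraph.Walk.getVert_cons_succ]
      simpa using ih k

private lemma dist_iso_le {V : Type*} {G : SimpleGraph V} (hconn : G.Connected)
    (φ : G ≃g G) (u v : V) : G.dist (φ u) (φ v) ≤ G.dist u v := by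
  obtain ⟨p, hp⟩ := hconn.exists_walk_length_eq_dist u v
  calc G.dist (φ u) (φ v) ≤ (p.map φ.toHom).length := SimpleGraph.dist_le _
    _ = G.dist u v := by rw [SimpleGraph.Walk.length_map, hp]

/-- Proposition 6: a finite connected vertex-transitive simple graph on at least
three vertices satisfies `ρ_{1/2}(Γ) ≥ 1/4`: every `A ⊆ V` with `2|A| ≥ |V|` has
`4·δ(A) ≥ δ(Γ)`. -/
theorem statement_3 {V : Type*} [Fintype V] [DecidableEq V] (G : SimpleGraph V)
    (hconn : G.Connected)
    (hcard : 3 ≤ Fintype.card V)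
    (htrans : ∀ x y : V, ∃ φ : G ≃g G, φ x = y)
    (A : Finset V) (hA : Fintype.card V ≤ 2 * A.card) :
    Finset.univ.sup (fun pq : V × V => G.dist pq.1 pq.2) ≤
      4 * (A ×ˢ A).sup (fun pq : V × V => G.dist pq.1 pq.2) := by
  set r := (A ×ˢ A).sup (fun pq : V × V => G.dist pq.1 pq.2) with hr
  -- distances within A are ≤ r
  have hdistA : ∀ a ∈ A, ∀ b ∈ A, G.dist a b ≤ r := by
    intro a ha b hb
    exact Finset.le_sup (f := fun pq : V × V => G.dist pq.1 pq.2) (b := (a, b))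
      (Finset.mem_product.2 ⟨ha, hb⟩)
  -- A has at least two elements
  have hA2 : 2 ≤ A.card := by omega
  have hr1 : 1 ≤ r := by
    obtain ⟨a, ha, b, hb, hab⟩ := Finset.one_lt_card.mp (by omega : 1 < A.card)
    have := hconn.pos_dist_of_ne hab
    exact le_trans this (hdistA a ha b hb)
  obtain ⟨a₀, ha₀⟩ := Finset.card_pos.mp (by omega : 0 < A.card)
  apply Finset.sup_le
  rintro ⟨x, y⟩ -
  simp only
  obtain ⟨φ, hφ⟩ := htrans a₀ x
  obtain ⟨ψ, hψ⟩ := htrans a₀ y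
  set A₁ := A.image φ with hA₁
  set A₂ := A.image ψ with hA₂
  have hxA₁ : x ∈ A₁ := hφ ▸ Finset.mem_image_of_mem _ ha₀
  have hyA₂ : y ∈ A₂ := hψ ▸ Finset.mem_image_of_mem _ ha₀
  have hd₁ : ∀ u ∈ A₁, ∀ v ∈ A₁, G.dist u v ≤ r := by
    rintro u hu v hv
    obtain ⟨a, ha, rfl⟩ := Finset.mem_image.mp hu
    obtain ⟨b, hb, rfl⟩ := Finset.mem_image.mp hv
    exact le_trans (dist_iso_le hconn φ a b) (hdistA a ha b hb)
  have hd₂ : ∀ u ∈ A₂, ∀ v ∈ A₂, G.dist u v ≤ r := by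
    rintro u hu v hv
    obtain ⟨a, ha, rfl⟩ := Finset.mem_image.mp hu
    obtain ⟨b, hb, rfl⟩ := Finset.mem_image.mp hv
    exact le_trans (dist_iso_le hconn ψ a b) (hdistA a ha b hb)
  by_cases hint : (A₁ ∩ A₂).Nonempty
  · obtain ⟨z, hz⟩ := hint
    have hz₁ := Finset.mem_of_mem_inter_left hz
    have hz₂ := Finset.mem_of_mem_inter_right hz
    have : G.dist x y ≤ G.dist x z + G.dist z y := hconn.dist_triangle
    have h1 := hd₁ x hxA₁ z hz₁
    have h2 := hd₂ z hz₂ y hyA₂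
    omega
  · -- disjoint case: A₁ ∪ A₂ = univ
    have hcard₁ : A₁.card = A.card := Finset.card_image_of_injective _ φ.injective
    have hcard₂ : A₂.card = A.card := Finset.card_image_of_injective _ ψ.injective
    have hdisj : Disjoint A₁ A₂ := Finset.not_nonempty_iff_eq_empty.mp hint |>
      Finset.disjoint_iff_inter_eq_empty.mpr
    have huniv : A₁ ∪ A₂ = Finset.univ := by
      apply Finset.eq_univ_of_card
      rw [Finset.card_union_of_disjoint hdisj, hcard₁, hcard₂]
      have := Finset.card_le_univ (A₁ ∪ A₂)
      rw [Finset.card_union_of_disjoint hdisj, hcard₁, hcard₂] at this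
      omega
    obtain ⟨p, hp⟩ := hconn.exists_walk_length_eq_dist x y
    set D := G.dist x y with hD
    set k := (D + 1) / 2 with hk
    set m := p.getVert k with hm
    have hm1 : G.dist x m ≤ k := dist_getVert_left hconn p k
    have hm2 : G.dist m y ≤ D - k := by
      have := dist_getVert_right p k
      rwa [hp] at this
    have htri : D ≤ G.dist x m + G.dist m y := hconn.dist_triangle
    have hmem : m ∈ A₁ ∪ A₂ := huniv ▸ Finset.mem_univ m
    rcases Finset.mem_union.mp hmem with h | h
    · have := hd₁ x hxA₁ m h
      omega
    · have := hd₂ m h y hyA₂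
      omega
end

section
/- There exist constants c₁, c₂ > 0 such that for all n ≥ 2, the diameter δ(Cay(G_n, S)) of the Cayley graph of the lamplighter group G_n = ℤ₂ ≀ ℤ_n with generating set S satisfies c₁·n ≤ δ(Cay(G_n, S)) ≤ c₂·n. -/
noncomputable section

/-- The underlying set of the lamplighter group `ℤ₂ ≀ ℤ_n`. -/
abbrev Lamplighter (n : ℕ) := (ZMod n → ZMod 2) × ZMod n

/-- Multiplication in the lamplighter group `ℤ₂ ≀ ℤ_n = (⊕ ℤ₂) ⋊ ℤ_n`, where `k ∈ ℤ_n`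
acts on configurations by `(k·f)(i) = f(i − k)`. -/
def llMul (n : ℕ) (x y : Lamplighter n) : Lamplighter n :=
  (fun i => x.1 i + y.1 (i - x.2), x.2 + y.2)

/-- Inversion in the lamplighter group `ℤ₂ ≀ ℤ_n`. -/
def llInv (n : ℕ) (x : Lamplighter n) : Lamplighter n :=
  (fun i => -x.1 (i + x.2), -x.2)

/-- The generator `(δ₀, 0)`: the lamp at position `0` is lit, no shift. -/
def llGenA (n : ℕ) : Lamplighter n :=
  (fun i => if i = 0 then 1 else 0, 0)

/-- The generator `(0, 1)`: no lamps lit, shift by `1`. -/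
def llGenB (n : ℕ) : Lamplighter n := (fun _ => 0, 1)

/-- The symmetrized generating set `S ∪ S⁻¹` of the lamplighter group. -/
def llGens (n : ℕ) : List (Lamplighter n) :=
  [llGenA n, llGenB n, llInv n (llGenA n), llInv n (llGenB n)]

/-- The Cayley graph of the lamplighter group `ℤ₂ ≀ ℤ_n` with respect to
`S = {(δ₀,0), (0,1)}`: distinct `x, y` are adjacent iff `y = s·x` for some `s ∈ S ∪ S⁻¹`
(the relation is symmetrized, which changes nothing as `S ∪ S⁻¹` is closed under inverses). -/
def llGraph (n : ℕ) : SimpleGraph (Lamplighter n) where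
  Adj x y := x ≠ y ∧ ∃ s ∈ llGens n, y = llMul n s x ∨ x = llMul n s y
  symm := by
    constructor
    rintro x y ⟨h1, s, hs, h2⟩
    exact ⟨h1.symm, s, hs, h2.symm⟩
  loopless := ⟨fun x h => h.1 rfl⟩

/-- The diameter of the Cayley graph of the lamplighter group `ℤ₂ ≀ ℤ_n`. -/
def llDiam (n : ℕ) : ℕ :=
  sSup {d : ℕ | ∃ x y : Lamplighter n, d = (llGraph n).dist x y}

/-!
Left multiplication by the generators either toggles the lamp at position `0` or rotates the
whole configuration, together with the cursor, by one step. One sweep around the cycle, toggling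
lamp `0` where needed after each rotation, changes the configuration arbitrarily in `2n` steps,
and at most `n` further rotations put the cursor in place: the diameter is at most `3n`.
Conversely an edge changes the number of lit lamps by at most one, so all `n` lamps lit is at
distance at least `n` from the identity.
-/

open Finset

theorem hammingNorm_comp_equiv {ι ι' β : Type*} [Fintype ι] [Fintype ι'] [DecidableEq β]
    [Zero β] (x : ι → β) (e : ι' ≃ ι) : hammingNorm (x ∘ e) = hammingNorm x :=
  card_equiv e (by simp)

theorem hammingNorm_le_hammingDist_add {ι β : Type*} [Fintype ι] [DecidableEq β] [Zero β]
    (x y : ι → β) : hammingNorm x ≤ hammingDist x y + hammingNorm y := by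
  simpa only [hammingDist_zero_right] using hammingDist_triangle x y 0

theorem ZMod.sum_range_natCast (n : ℕ) [NeZero n] {M : Type*} [AddCommMonoid M]
    (f : ZMod n → M) : ∑ k ∈ range n, f k = ∑ i, f i :=
  sum_nbij' Nat.cast ZMod.val (by simp) (by simp [ZMod.val_lt])
    (fun _ hk => ZMod.val_cast_of_lt (mem_range.mp hk)) (by simp) (fun _ _ => rfl)

namespace SimpleGraph

variable {V : Type*} {G : SimpleGraph V} {f : V → ℕ}

theorem Walk.le_add_length (hf : ∀ ⦃x y⦄, G.Adj x y → f y ≤ f x + 1) {x y : V}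
    (w : G.Walk x y) : f y ≤ f x + w.length := by
  induction w with
  | nil => simp
  | cons h _ ih =>
    have := hf h
    simp only [Walk.length_cons]
    omega

theorem Reachable.le_add_dist (hf : ∀ ⦃x y⦄, G.Adj x y → f y ≤ f x + 1) {x y : V}
    (h : G.Reachable x y) : f y ≤ f x + G.dist x y := by
  obtain ⟨w, hw⟩ := h.exists_walk_length_eq_dist
  exact hw ▸ w.le_add_length hf

end SimpleGraph

namespace Lamplighter

variable {n : ℕ}

theorem llMul_llGenA (x : Lamplighter n) :
    llMul n (llGenA n) x = (x.1 + Pi.single 0 1, x.2) := by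
  ext i
  · simp [llMul, llGenA, Pi.single_apply, add_comm]
  · simp [llMul, llGenA]

theorem llMul_llGenB (x : Lamplighter n) :
    llMul n (llGenB n) x = (fun i => x.1 (i - 1), x.2 + 1) := by
  simp [llMul, llGenB, add_comm]

theorem edist_llMul_le_one {s : Lamplighter n} (hs : s ∈ llGens n) (x : Lamplighter n) :
    (llGraph n).edist x (llMul n s x) ≤ 1 := by
  rw [SimpleGraph.edist_le_one_iff_adj_or_eq]
  by_cases h : x = llMul n s x
  · exact .inr h
  · exact .inl ⟨h, s, hs, .inl rfl⟩

theorem edist_toggle_le (x : Lamplighter n) (a : ZMod 2) :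
    (llGraph n).edist x (x.1 + Pi.single 0 a, x.2) ≤ 1 := by
  rcases (by decide : ∀ b : ZMod 2, b = 0 ∨ b = 1) a with rfl | rfl
  · simp
  · simpa [llMul_llGenA] using edist_llMul_le_one (s := llGenA n) (by simp [llGens]) x

theorem edist_rotate_le (x : Lamplighter n) (m : ℕ) :
    (llGraph n).edist x (fun i => x.1 (i - m), x.2 + m) ≤ m := by
  induction m with
  | zero => simp
  | succ m ih =>
    have hstep := edist_llMul_le_one (s := llGenB n) (by simp [llGens])
      (fun i => x.1 (i - m), x.2 + m)
    have hshift : ((fun i => x.1 (i - (m + 1 : ℕ)), x.2 + (m + 1 : ℕ)) : Lamplighter n) =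
        (fun i => x.1 (i - 1 - m), x.2 + m + 1) :=
      Prod.ext (funext fun i => congrArg x.1 (by push_cast; ring)) (by push_cast; ring)
    rw [llMul_llGenB] at hstep
    rw [hshift, Nat.cast_succ]
    exact (llGraph n).edist_triangle.trans (add_le_add ih hstep)

/-- Each step rotates and then toggles lamp `0` by `p j`, where `j` is the number of steps still
to come, so that this toggle ends up at position `j`. -/
theorem edist_sweep_le (p : ZMod n → ZMod 2) (m : ℕ) (x : Lamplighter n) :
    (llGraph n).edist x
      ((fun i => x.1 (i - m)) + ∑ k ∈ range m, Pi.single (k : ZMod n) (p k), x.2 + m) ≤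
      2 * m := by
  induction m generalizing x with
  | zero => simp
  | succ m ih =>
    set y : Lamplighter n := (fun i => x.1 (i - 1), x.2 + 1)
    set z : Lamplighter n := (y.1 + Pi.single 0 (p m), y.2)
    have hz : ((fun i => x.1 (i - (m + 1 : ℕ))) +
          ∑ k ∈ range (m + 1), Pi.single (k : ZMod n) (p k), x.2 + (m + 1 : ℕ)) =
        ((fun i => z.1 (i - m)) + ∑ k ∈ range m, Pi.single (k : ZMod n) (p k), z.2 + m) := by
      refine Prod.ext (funext fun i => ?_) (by simp only [z, y]; push_cast; ring)
      simp only [z, y, sum_range_succ, Pi.add_apply, Pi.single_apply, sub_eq_zero]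
      push_cast
      ring_nf
    rw [hz]
    calc _ ≤ (llGraph n).edist x y + (llGraph n).edist y z + (llGraph n).edist z _ :=
          (llGraph n).edist_triangle.trans (add_le_add_left (llGraph n).edist_triangle _)
      _ ≤ 1 + 1 + 2 * m := add_le_add (add_le_add (by simpa using edist_rotate_le x 1)
          (edist_toggle_le y _)) (ih z)
      _ = 2 * (m + 1 : ℕ) := by push_cast; ring

theorem edist_le_three_mul [NeZero n] (x y : Lamplighter n) :
    (llGraph n).edist x y ≤ 3 * n := by
  set r := (y.2 - x.2).val
  set z : Lamplighter n := (fun i => y.1 (i + r), x.2)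
  have hxz : (llGraph n).edist x z ≤ 2 * n := by
    have hsweep := edist_sweep_le (z.1 - x.1) n x
    rw [ZMod.sum_range_natCast n (fun k => Pi.single k ((z.1 - x.1) k)), univ_sum_single,
      ZMod.natCast_self, add_zero] at hsweep
    simpa only [sub_zero, add_sub_cancel] using hsweep
  have hzy : (llGraph n).edist z y ≤ r := by
    convert edist_rotate_le z r using 2
    simp [z, r]
  calc (llGraph n).edist x y ≤ (llGraph n).edist x z + (llGraph n).edist z y :=
        (llGraph n).edist_triangle
    _ ≤ 2 * n + r := add_le_add hxz hzy
    _ ≤ 3 * n := by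
      have := ZMod.val_lt (y.2 - x.2)
      norm_cast
      omega

variable [NeZero n]

theorem hammingNorm_shift {β : Type*} [Zero β] [DecidableEq β] (f : ZMod n → β) (c : ZMod n) :
    hammingNorm (fun i => f (i - c)) = hammingNorm f :=
  hammingNorm_comp_equiv f (Equiv.subRight c)

theorem hammingDist_llMul (s x : Lamplighter n) :
    hammingDist (fun i => x.1 (i - s.2)) (llMul n s x).1 = hammingNorm s.1 := by
  rw [hammingDist_eq_hammingNorm]
  show hammingNorm (-(fun i => x.1 (i - s.2)) + (s.1 + fun i => x.1 (i - s.2))) = _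
  rw [add_comm s.1, neg_add_cancel_left]

theorem hammingNorm_le_one_of_mem_llGens {s : Lamplighter n} (hs : s ∈ llGens n) :
    hammingNorm s.1 ≤ 1 := by
  refine card_le_one.mpr fun i hi j hj => ?_
  simp only [llGens, List.mem_cons, List.not_mem_nil, or_false] at hs
  rcases hs with rfl | rfl | rfl | rfl <;> simp_all [llGenA, llGenB, llInv]

theorem hammingNorm_le_of_adj {x y : Lamplighter n} (h : (llGraph n).Adj x y) :
    hammingNorm y.1 ≤ hammingNorm x.1 + 1 := by
  obtain ⟨-, s, hs, rfl | rfl⟩ := h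
  · calc hammingNorm (llMul n s x).1
          ≤ hammingDist (llMul n s x).1 (fun i => x.1 (i - s.2)) +
            hammingNorm (fun i => x.1 (i - s.2)) := hammingNorm_le_hammingDist_add _ _
      _ ≤ hammingNorm x.1 + 1 := by
        rw [hammingDist_comm, hammingDist_llMul, hammingNorm_shift]
        linarith [hammingNorm_le_one_of_mem_llGens hs]
  · calc hammingNorm y.1 = hammingNorm (fun i => y.1 (i - s.2)) := (hammingNorm_shift _ _).symm
      _ ≤ hammingDist (fun i => y.1 (i - s.2)) (llMul n s y).1 + hammingNorm (llMul n s y).1 :=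
        hammingNorm_le_hammingDist_add _ _
      _ ≤ hammingNorm (llMul n s y).1 + 1 := by
        rw [hammingDist_llMul]
        linarith [hammingNorm_le_one_of_mem_llGens hs]

theorem llGraph_reachable (x y : Lamplighter n) : (llGraph n).Reachable x y :=
  SimpleGraph.reachable_of_edist_ne_top <|
    ne_top_of_le_ne_top (by exact_mod_cast ENat.natCast_ne_top (3 * n)) (edist_le_three_mul x y)

theorem llDiam_bounds : n ≤ llDiam n ∧ llDiam n ≤ 3 * n := by
  have hdist (x y : Lamplighter n) : (llGraph n).dist x y ≤ 3 * n :=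
    ENat.toNat_le_of_le_natCast (by exact_mod_cast edist_le_three_mul x y)
  have hbdd : BddAbove {d | ∃ x y : Lamplighter n, d = (llGraph n).dist x y} := by
    refine ⟨3 * n, ?_⟩
    rintro d ⟨x, y, rfl⟩
    exact hdist x y
  constructor
  · have hlit := (llGraph_reachable (0, 0) (1, 0)).le_add_dist
      (f := fun x : Lamplighter n => hammingNorm x.1) fun _ _ h => hammingNorm_le_of_adj h
    simp only [hammingNorm_zero, zero_add] at hlit
    refine le_trans ?_ (le_csSup hbdd ⟨(0, 0), (1, 0), rfl⟩)
    simpa [hammingNorm] using hlit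
  · exact csSup_le ⟨_, (0, 0), (0, 0), rfl⟩ fun d ⟨x, y, hd⟩ => hd ▸ hdist x y

end Lamplighter

/-- the diameters of the Cayley graphs of the lamplighter groups `ℤ₂ ≀ ℤ_n`
grow linearly: `c₁·n ≤ δ(Cay(G_n,S)) ≤ c₂·n` for some constants `c₁, c₂ > 0`. -/
theorem statement_9 :
    ∃ c₁ : ℝ, 0 < c₁ ∧ ∃ c₂ : ℝ, 0 < c₂ ∧ ∀ n : ℕ, 2 ≤ n →
      c₁ * (n : ℝ) ≤ (llDiam n : ℝ) ∧ (llDiam n : ℝ) ≤ c₂ * (n : ℝ) := by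
  refine ⟨1, one_pos, 3, three_pos, fun n hn => ?_⟩
  have : NeZero n := ⟨by omega⟩
  obtain ⟨hlower, hupper⟩ := Lamplighter.llDiam_bounds (n := n)
  exact ⟨by rw [one_mul]; exact_mod_cast hlower, by exact_mod_cast hupper⟩
end
end

section
/- For every n ≥ 1, the level-n Hanoi Schreier graph Γ_n is connected and its diameter equals 2^n − 1. -/
noncomputable section

/-- The generator `a_{(ij)}` of the Hanoi Towers group acting on finite ternary words:
`a_{(ij)}(iw) = jw`, `a_{(ij)}(jw) = iw`, and `a_{(ij)}(kw) = k·a_{(ij)}(w)` for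
`k ∉ {i,j}`. -/
def hanoiMove (i j : Fin 3) : List (Fin 3) → List (Fin 3)
  | [] => []
  | x :: w => if x = i then j :: w else if x = j then i :: w else x :: hanoiMove i j w

/-- The level-`n` Hanoi Schreier graph `Γ_n`: vertices are ternary words of length `n`, and
distinct `x, y` are adjacent iff `y ∈ {a(x), b(x), c(x)}` with `a = a_{(01)}`, `b = a_{(02)}`,
`c = a_{(12)}` (the relation is symmetrized; since the generators are involutions this is the
same relation). -/
def hanoiGraph (n : ℕ) : SimpleGraph (List.Vector (Fin 3) n) where
  Adj x y := x ≠ y ∧ ∃ s ∈ [hanoiMove 0 1, hanoiMove 0 2, hanoiMove 1 2],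
    s x.toList = y.toList ∨ s y.toList = x.toList
  symm := ⟨by
    rintro x y ⟨h1, s, hs, h2⟩
    exact ⟨h1.symm, s, hs, h2.symm⟩⟩
  loopless := ⟨fun x h => h.1 rfl⟩

/-!
Read a word as the pegs of the discs, smallest disc first, so that `hanoiMove i j` moves the top
disc between pegs `i` and `j`. Then Γ_{n+1} consists of three copies of Γ_n, one for each position
of the largest disc, joined by single edges between configurations where all smaller discs sit on
the third peg. Induction on this decomposition gives a walk of length at most
`2 (2^n - 1) + 1 = 2^{n+1} - 1` between any two vertices. For the lower bound, the cost of the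
classical recursive solution gathering all discs on a fixed peg changes by at most one along an
edge, and it is `0` on one perfect configuration and `2^n - 1` on another.
-/

namespace List.Vector

variable {α : Type*} {n : ℕ}

theorem toList_snoc (v : List.Vector α n) (x : α) : (v.snoc x).toList = v.toList ++ [x] :=
  toList_append v _

theorem toList_replicate (a : α) : (replicate n a).toList = List.replicate n a :=
  rfl

theorem snoc_inj {v w : List.Vector α n} {x y : α} :
    v.snoc x = w.snoc y ↔ v = w ∧ x = y := by
  refine ⟨fun h => ?_, fun ⟨hvw, hxy⟩ => hvw ▸ hxy ▸ rfl⟩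
  have h' := congrArg toList h
  rw [toList_snoc, toList_snoc] at h'
  obtain ⟨hvw, hxy⟩ := List.append_inj' h' rfl
  exact ⟨toList_injective hvw, List.singleton_inj.mp hxy⟩

theorem exists_eq_snoc (v : List.Vector α (n + 1)) :
    ∃ (w : List.Vector α n) (x : α), v = w.snoc x :=
  ⟨v.reverse.tail.reverse, v.reverse.head, by
    rw [← reverse_cons, cons_head_tail, reverse_reverse]⟩

end List.Vector

namespace Hanoi

-- The peg other than `a` and `b`, using `0 + 1 + 2 = 0` in `Fin 3`.
def third (a b : Fin 3) : Fin 3 := -(a + b)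

theorem third_ne_left {a b : Fin 3} (h : a ≠ b) : third a b ≠ a := by revert a b; decide

theorem third_ne_right {a b : Fin 3} (h : a ≠ b) : third a b ≠ b := by revert a b; decide

theorem eq_third {a b c : Fin 3} (hab : a ≠ b) (hca : c ≠ a) (hcb : c ≠ b) :
    c = third a b := by
  revert a b c; decide

variable {i j : Fin 3}

theorem length_hanoiMove (i j : Fin 3) : ∀ l, (hanoiMove i j l).length = l.length
  | [] => rfl
  | x :: w => by
    simp only [hanoiMove]
    split_ifs <;> simp [length_hanoiMove i j w]

theorem hanoiMove_comm (i j : Fin 3) : hanoiMove i j = hanoiMove j i := by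
  funext l
  induction l with
  | nil => rfl
  | cons x w ih => by_cases hxi : x = i <;> by_cases hxj : x = j <;> simp_all [hanoiMove]

theorem hanoiMove_hanoiMove (hij : i ≠ j) (l : List (Fin 3)) :
    hanoiMove i j (hanoiMove i j l) = l := by
  induction l with
  | nil => rfl
  | cons x w ih =>
    by_cases hxi : x = i
    · simp [hanoiMove, hxi, hij.symm]
    · by_cases hxj : x = j <;> simp [hanoiMove, hxi, hxj, ih, hij.symm]

theorem hanoiMove_append_of_mem {a : Fin 3} {w : List (Fin 3)} (ha : a ∈ w)
    (hai : a = i ∨ a = j) (v : List (Fin 3)) : hanoiMove i j (w ++ v) = hanoiMove i j w ++ v := by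
  induction w with
  | nil => simp at ha
  | cons x w ih =>
    by_cases hx : x = i ∨ x = j
    · simp only [List.cons_append, hanoiMove]
      split_ifs <;> simp_all
    · have ha' : a ∈ w := (List.mem_cons.mp ha).resolve_left (by rintro rfl; exact hx hai)
      simp only [not_or] at hx
      simp [hanoiMove, hx.1, hx.2, ih ha']

theorem hanoiMove_append_of_forall {w : List (Fin 3)} (hw : ∀ a ∈ w, a ≠ i ∧ a ≠ j)
    (v : List (Fin 3)) : hanoiMove i j (w ++ v) = w ++ hanoiMove i j v := by
  induction w with
  | nil => rfl
  | cons x w ih =>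
    obtain ⟨hxi, hxj⟩ := hw x List.mem_cons_self
    simp [hanoiMove, hxi, hxj, ih fun a ha => hw a (List.mem_cons_of_mem _ ha)]

theorem hanoiMove_of_forall {w : List (Fin 3)} (hw : ∀ a ∈ w, a ≠ i ∧ a ≠ j) :
    hanoiMove i j w = w := by
  simpa [hanoiMove] using hanoiMove_append_of_forall hw []

theorem hanoiMove_singleton (i j x : Fin 3) : hanoiMove i j [x] = [Equiv.swap i j x] := by
  rw [Equiv.swap_apply_def]
  simp only [hanoiMove]
  split_ifs <;> rfl

open SimpleGraph List.Vector

theorem hanoiGraph_adj_iff {n : ℕ} {x y : List.Vector (Fin 3) n} :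
    (hanoiGraph n).Adj x y ↔
      x ≠ y ∧ ∃ i j, i ≠ j ∧ hanoiMove i j x.toList = y.toList := by
  constructor
  · rintro ⟨hxy, s, hs, h⟩
    refine ⟨hxy, ?_⟩
    have key : ∀ i j : Fin 3, i ≠ j → s = hanoiMove i j →
        ∃ i j, i ≠ j ∧ hanoiMove i j x.toList = y.toList := by
      rintro i j hij rfl
      rcases h with h | h
      · exact ⟨i, j, hij, h⟩
      · exact ⟨i, j, hij, by rw [← h, hanoiMove_hanoiMove hij]⟩
    simp only [List.mem_cons, List.not_mem_nil, or_false] at hs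
    rcases hs with rfl | rfl | rfl
    exacts [key 0 1 (by decide) rfl, key 0 2 (by decide) rfl, key 1 2 (by decide) rfl]
  · rintro ⟨hxy, i, j, hij, h⟩
    refine ⟨hxy, hanoiMove i j, ?_, Or.inl h⟩
    have hcases : ∀ k : Fin 3, k = 0 ∨ k = 1 ∨ k = 2 := by decide
    rcases hcases i with rfl | rfl | rfl <;> rcases hcases j with rfl | rfl | rfl <;>
      simp [hanoiMove_comm 1 0, hanoiMove_comm 2 0, hanoiMove_comm 2 1] at hij ⊢

-- Reducible, so that `snocHom n t x` is seen as `x.snoc t` when walks are mapped along it.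
abbrev snocHom (n : ℕ) (t : Fin 3) : hanoiGraph n →g hanoiGraph (n + 1) where
  toFun x := x.snoc t
  map_rel' {x y} h := by
    obtain ⟨hxy, i, j, hij, h⟩ := hanoiGraph_adj_iff.mp h
    have hx : ∃ a ∈ x.toList, a = i ∨ a = j := by
      by_contra! hx
      exact hxy (toList_injective (h ▸ (hanoiMove_of_forall hx).symm))
    obtain ⟨a, ha, hai⟩ := hx
    refine hanoiGraph_adj_iff.mpr ⟨fun e => hxy (snoc_inj.mp e).1, i, j, hij, ?_⟩
    rw [toList_snoc, toList_snoc, hanoiMove_append_of_mem ha hai, h]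

theorem hanoiGraph_adj_snoc_replicate_third (n : ℕ) (hij : i ≠ j) :
    (hanoiGraph (n + 1)).Adj ((replicate n (third i j)).snoc i)
      ((replicate n (third i j)).snoc j) := by
  refine hanoiGraph_adj_iff.mpr ⟨fun e => hij (snoc_inj.mp e).2, i, j, hij, ?_⟩
  have hk : ∀ a ∈ (replicate n (third i j)).toList, a ≠ i ∧ a ≠ j := fun a ha => by
    obtain rfl := List.eq_of_mem_replicate ha
    exact ⟨third_ne_left hij, third_ne_right hij⟩
  rw [toList_snoc, toList_snoc, hanoiMove_append_of_forall hk, hanoiMove_singleton,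
    Equiv.swap_apply_left]

theorem exists_walk_length_le (n : ℕ) (x y : List.Vector (Fin 3) n) :
    ∃ p : (hanoiGraph n).Walk x y, p.length ≤ 2 ^ n - 1 := by
  induction n with
  | zero => exact ⟨Walk.nil.copy rfl (Subsingleton.elim _ _), by simp⟩
  | succ n ih =>
    obtain ⟨w, t, rfl⟩ := exists_eq_snoc x
    obtain ⟨v, u, rfl⟩ := exists_eq_snoc y
    have hpow : 2 ^ (n + 1) - 1 = (2 ^ n - 1) + 1 + (2 ^ n - 1) := by
      have := Nat.one_le_two_pow (n := n); rw [pow_succ]; omega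
    by_cases htu : t = u
    · subst htu
      obtain ⟨p, hp⟩ := ih w v
      exact ⟨p.map (snocHom n t), by simp only [Walk.length_map]; omega⟩
    · -- park the smaller discs on the third peg, move the largest disc, then unpark them
      obtain ⟨p, hp⟩ := ih w (replicate n (third t u))
      obtain ⟨q, hq⟩ := ih (replicate n (third t u)) v
      refine ⟨(p.map (snocHom n t)).append
        (.cons (hanoiGraph_adj_snoc_replicate_third n htu) (q.map (snocHom n u))), ?_⟩
      simp only [Walk.length_append, Walk.length_cons, Walk.length_map]
      omega

theorem hanoiGraph_connected (n : ℕ) : (hanoiGraph n).Connected :=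
  .mk fun x y => (exists_walk_length_le n x y).elim fun p _ => ⟨p⟩

theorem hanoiGraph_dist_le (n : ℕ) (x y : List.Vector (Fin 3) n) :
    (hanoiGraph n).dist x y ≤ 2 ^ n - 1 :=
  (exists_walk_length_le n x y).elim fun p hp => (dist_le p).trans hp

/-- The number of moves the classical recursive solution needs to gather all discs on peg `t`,
for a configuration listed from the largest disc down. -/
def gatherCost : Fin 3 → List (Fin 3) → ℕ
  | _, [] => 0
  | t, x :: l => if x = t then gatherCost t l else 2 ^ l.length + gatherCost (third x t) l

theorem gatherCost_replicate (m : ℕ) (k t : Fin 3) :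
    gatherCost t (List.replicate m k) = if t = k then 0 else 2 ^ m - 1 := by
  induction m generalizing t with
  | zero => simp [gatherCost]
  | succ m ih =>
    by_cases htk : t = k
    · simp [List.replicate_succ, gatherCost, htk, ih]
    · have := Nat.one_le_two_pow (n := m)
      simp only [List.replicate_succ, gatherCost, Ne.symm htk, if_false, List.length_replicate, ih,
        third_ne_left (Ne.symm htk), htk, pow_succ]
      omega

theorem gatherCost_swap_cons_replicate_le (hij : i ≠ j) (x t : Fin 3) (m : ℕ) :
    gatherCost t (Equiv.swap i j x :: List.replicate m (third i j)) ≤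
      gatherCost t (x :: List.replicate m (third i j)) + 1 := by
  have := Nat.one_le_two_pow (n := m)
  simp only [gatherCost, gatherCost_replicate, List.length_replicate, Equiv.swap_apply_def]
  generalize 2 ^ m = P at *
  have hcases : ∀ k : Fin 3, k = 0 ∨ k = 1 ∨ k = 2 := by decide
  rcases hcases i with rfl | rfl | rfl <;> rcases hcases j with rfl | rfl | rfl <;>
    rcases hcases x with rfl | rfl | rfl <;> rcases hcases t with rfl | rfl | rfl <;>
    simp +decide at hij ⊢ <;> omega

theorem gatherCost_reverse_hanoiMove_le (hij : i ≠ j) (t : Fin 3) (l : List (Fin 3)) :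
    gatherCost t (hanoiMove i j l).reverse ≤ gatherCost t l.reverse + 1 := by
  induction l using List.reverseRecOn generalizing t with
  | nil => simp [hanoiMove, gatherCost]
  | append_singleton w x ih =>
    by_cases hw : ∃ a ∈ w, a = i ∨ a = j
    · obtain ⟨a, ha, hai⟩ := hw
      rw [hanoiMove_append_of_mem ha hai]
      simp only [List.reverse_append, List.reverse_singleton, List.singleton_append, gatherCost,
        List.length_reverse, length_hanoiMove]
      split_ifs
      exacts [ih t, by have := ih (third x t); omega]
    · -- the move acts on the largest disc, so all smaller discs sit on the third peg
      push Not at hw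
      have hrep : w = List.replicate w.length (third i j) :=
        List.eq_replicate_of_mem fun a ha => eq_third hij (hw a ha).1 (hw a ha).2
      rw [hanoiMove_append_of_forall hw, hanoiMove_singleton, hrep]
      simpa [List.reverse_replicate] using gatherCost_swap_cons_replicate_le hij x t w.length

theorem gatherCost_le_add_length {n : ℕ} (t : Fin 3) {x y : List.Vector (Fin 3) n}
    (p : (hanoiGraph n).Walk x y) :
    gatherCost t y.toList.reverse ≤ gatherCost t x.toList.reverse + p.length := by
  induction p with
  | nil => simp
  | @cons u v w h p ih =>
    obtain ⟨-, i, j, hij, hmove⟩ := hanoiGraph_adj_iff.mp h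
    have := gatherCost_reverse_hanoiMove_le hij t u.toList
    rw [hmove] at this
    rw [Walk.length_cons]
    omega

theorem two_pow_sub_one_le_dist_replicate (n : ℕ) (hij : i ≠ j) :
    2 ^ n - 1 ≤ (hanoiGraph n).dist (replicate n i) (replicate n j) := by
  obtain ⟨p, hp⟩ :=
    (hanoiGraph_connected n).exists_walk_length_eq_dist (replicate n i) (replicate n j)
  have := gatherCost_le_add_length i p
  simp only [toList_replicate, List.reverse_replicate, gatherCost_replicate, if_true,
    if_neg hij] at this
  omega

end Hanoi

open Hanoi

theorem statement_12_general (n : ℕ) :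
    (hanoiGraph n).Connected ∧
      Finset.univ.sup
          (fun pq : List.Vector (Fin 3) n × List.Vector (Fin 3) n =>
            (hanoiGraph n).dist pq.1 pq.2) = 2 ^ n - 1 := by
  refine ⟨hanoiGraph_connected n, le_antisymm ?_ ?_⟩
  · exact Finset.sup_le fun pq _ => hanoiGraph_dist_le n pq.1 pq.2
  · exact (two_pow_sub_one_le_dist_replicate n (i := 0) (j := 1) (by decide)).trans
      (Finset.le_sup (f := fun pq => (hanoiGraph n).dist pq.1 pq.2) (Finset.mem_univ (_, _)))

/-- for every `n ≥ 1` the level-`n` Hanoi Schreier graph `Γ_n` is connected and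
has diameter `2^n − 1`. -/
theorem statement_12 (n : ℕ) (hn : 1 ≤ n) :
    (hanoiGraph n).Connected ∧
      Finset.univ.sup
          (fun pq : List.Vector (Fin 3) n × List.Vector (Fin 3) n =>
            (hanoiGraph n).dist pq.1 pq.2) = 2 ^ n - 1 :=
  statement_12_general n
end
end

section
/- For every n ≥ 1, the level-n Hanoi Schreier graph Γ_n satisfies ρ_{2/3}(Γ_n) ≥ 1/2: every subset A ⊆ V_n with 3|A| ≥ 2·3^n has 2·δ(A) ≥ δ(Γ_n), where δ(A) = max_{x,y∈A} d(x,y) and δ(Γ_n) is the diameter of Γ_n. -/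
noncomputable section

/-!
Read a vertex as a Tower of Hanoi configuration: letter `k` is the peg of disk `k`, smallest disk
first, and `a_{(ij)}` moves the smallest disk lying on peg `i` or `j`. The recursive solution
shows that `Γ_n` is connected of diameter at most `2 ^ n - 1`, while the number `towerDist q` of
moves needed to gather everything on peg `q` is `1`-Lipschitz.

So it suffices to show `|A| < 2 · 3 ^ (n - 1)` when `δ(A) < 2 ^ (n - 1)`. Let `p` be the peg of the
largest disk of some element of `A` and `L` the least value of `towerDist p` on `A`. An element of
`A` whose largest disk is on `p` has its smaller disks at `towerDist p ≥ L`. One whose largest disk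
is on `t ≠ p` has `towerDist p < L + 2 ^ (n - 1)` by the Lipschitz bound, and `2 ^ (n - 1)` of
that is spent on the largest disk, so its smaller disks are at `towerDist r < L` for the third
peg `r`. Since permuting the pegs preserves `towerDist`, the configurations of the
smaller disks of the two kinds are complementary in number, and the first kind is nonempty.
-/

/-- `i + j + thirdPeg i j = 0 = 0 + 1 + 2` in `Fin 3`; note `thirdPeg i i = i`. -/
def thirdPeg (i j : Fin 3) : Fin 3 := -(i + j)

lemma thirdPeg_comm (i j : Fin 3) : thirdPeg i j = thirdPeg j i := by
  rw [thirdPeg, thirdPeg, add_comm]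

lemma thirdPeg_self (i : Fin 3) : thirdPeg i i = i := by
  revert i; decide

lemma thirdPeg_ne_left {i j : Fin 3} (h : i ≠ j) : thirdPeg i j ≠ i := by
  revert i j; decide

lemma thirdPeg_ne_right {i j : Fin 3} (h : i ≠ j) : thirdPeg i j ≠ j := by
  revert i j; decide

lemma eq_thirdPeg {i j x : Fin 3} (h : i ≠ j) (hi : x ≠ i) (hj : x ≠ j) : x = thirdPeg i j := by
  revert i j x; decide

lemma thirdPeg_thirdPeg_left {i j : Fin 3} (h : i ≠ j) : thirdPeg i (thirdPeg i j) = j := by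
  revert i j; decide

lemma thirdPeg_thirdPeg_right {i j : Fin 3} (h : i ≠ j) : thirdPeg j (thirdPeg i j) = i := by
  revert i j; decide

lemma apply_thirdPeg (σ : Equiv.Perm (Fin 3)) (i j : Fin 3) :
    σ (thirdPeg i j) = thirdPeg (σ i) (σ j) := by
  rcases eq_or_ne i j with rfl | h
  · rw [thirdPeg_self, thirdPeg_self]
  · exact eq_thirdPeg (σ.injective.ne h) (σ.injective.ne (thirdPeg_ne_left h))
      (σ.injective.ne (thirdPeg_ne_right h))

/-- The number of moves needed to gather all disks on peg `q`, for a configuration listed from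
the largest disk down (the reverse of the order used by `hanoiGraph`): a largest disk off `q`
costs the `2 ^ |w|` moves that park the smaller disks on the third peg and then move it. -/
def towerDist : Fin 3 → List (Fin 3) → ℕ
  | _, [] => 0
  | q, t :: w => if t = q then towerDist q w else 2 ^ w.length + towerDist (thirdPeg t q) w

lemma towerDist_replicate_self (m : ℕ) (k : Fin 3) : towerDist k (List.replicate m k) = 0 := by
  induction m with
  | zero => rfl
  | succ m ih => simpa [List.replicate_succ, towerDist] using ih

lemma towerDist_replicate (m : ℕ) {k q : Fin 3} (h : k ≠ q) :
    towerDist q (List.replicate m k) = 2 ^ m - 1 := by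
  induction m generalizing q with
  | zero => rfl
  | succ m ih =>
    have := Nat.one_le_two_pow (n := m)
    rw [List.replicate_succ, towerDist, if_neg h, List.length_replicate,
      ih (thirdPeg_ne_left h).symm, pow_succ]
    omega

lemma towerDist_perm (σ : Equiv.Perm (Fin 3)) (q : Fin 3) (w : List (Fin 3)) :
    towerDist (σ q) (w.map σ) = towerDist q w := by
  induction w generalizing q with
  | nil => rfl
  | cons t w ih =>
    simp only [List.map_cons, towerDist, List.length_map, σ.injective.eq_iff, ← apply_thirdPeg, ih]

lemma towerDist_cons_replicate_le (m : ℕ) {a b : Fin 3} (h : a ≠ b) (q : Fin 3) :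
    towerDist q (a :: List.replicate m (thirdPeg a b)) ≤
      towerDist q (b :: List.replicate m (thirdPeg a b)) + 1 := by
  have := Nat.one_le_two_pow (n := m)
  rcases eq_or_ne a q with rfl | haq
  · rw [towerDist, if_pos rfl, towerDist, if_neg h.symm, thirdPeg_comm a b,
      towerDist_replicate m (thirdPeg_ne_right h.symm), towerDist_replicate_self]
    simp only [List.length_replicate]; omega
  rcases eq_or_ne b q with rfl | hbq
  · rw [towerDist, if_neg haq, towerDist, if_pos rfl, towerDist_replicate_self,
      towerDist_replicate m (thirdPeg_ne_right h)]
    simp only [List.length_replicate]; omega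
  · have hq : q = thirdPeg a b := eq_thirdPeg h haq.symm hbq.symm
    subst hq
    rw [towerDist, if_neg haq, towerDist, if_neg hbq, thirdPeg_thirdPeg_left h,
      thirdPeg_thirdPeg_right h, towerDist_replicate m (thirdPeg_ne_left h),
      towerDist_replicate m (thirdPeg_ne_right h)]
    omega

lemma towerDist_append_le {v v' : List (Fin 3)} (hlen : v.length = v'.length)
    (h : ∀ q, towerDist q v ≤ towerDist q v' + 1) (u : List (Fin 3)) (q : Fin 3) :
    towerDist q (u ++ v) ≤ towerDist q (u ++ v') + 1 := by
  induction u generalizing q with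
  | nil => exact h q
  | cons t u ih =>
    simp only [List.cons_append, towerDist, List.length_append, hlen]
    split
    · exact ih q
    · have := ih (thirdPeg t q); omega

lemma hanoiMove_comm (i j : Fin 3) : hanoiMove i j = hanoiMove j i := by
  funext w
  induction w with
  | nil => rfl
  | cons x w ih => by_cases hi : x = i <;> by_cases hj : x = j <;> simp_all [hanoiMove]

lemma hanoiMove_mem_generators {i j : Fin 3} (h : i ≠ j) :
    hanoiMove i j ∈ [hanoiMove 0 1, hanoiMove 0 2, hanoiMove 1 2] := by
  fin_cases i <;> fin_cases j <;>
    simp_all [hanoiMove_comm 1 0, hanoiMove_comm 2 0, hanoiMove_comm 2 1]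

lemma hanoiMove_replicate_append {a b : Fin 3} (h : a ≠ b) (m : ℕ) (u : List (Fin 3)) :
    hanoiMove a b (List.replicate m (thirdPeg a b) ++ a :: u) =
      List.replicate m (thirdPeg a b) ++ b :: u := by
  induction m with
  | zero => simp [hanoiMove]
  | succ m ih =>
    simp [List.replicate_succ, hanoiMove, thirdPeg_ne_left h, thirdPeg_ne_right h, ih]

lemma hanoiMove_eq_self_or {i j : Fin 3} (hij : i ≠ j) (w : List (Fin 3)) :
    hanoiMove i j w = w ∨ ∃ a b m u, a ≠ b ∧ thirdPeg a b = thirdPeg i j ∧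
      w = List.replicate m (thirdPeg i j) ++ a :: u ∧
      hanoiMove i j w = List.replicate m (thirdPeg i j) ++ b :: u := by
  induction w with
  | nil => exact Or.inl rfl
  | cons x w ih =>
    by_cases hi : x = i
    · subst hi
      exact Or.inr ⟨x, j, 0, w, hij, rfl, rfl, by simp [hanoiMove]⟩
    by_cases hj : x = j
    · subst hj
      exact Or.inr ⟨x, i, 0, w, hij.symm, thirdPeg_comm _ _, rfl, by simp [hanoiMove, hij.symm]⟩
    have hx : x = thirdPeg i j := eq_thirdPeg hij hi hj
    have hmove : hanoiMove i j (x :: w) = x :: hanoiMove i j w := by simp [hanoiMove, hi, hj]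
    rcases ih with h | ⟨a, b, m, u, hab, hk, hw, hm⟩
    · exact Or.inl (by rw [hmove, h])
    · refine Or.inr ⟨a, b, m + 1, u, hab, hk, ?_, ?_⟩
      · rw [hw, hx, List.replicate_succ, List.cons_append]
      · rw [hmove, hm, hx, List.replicate_succ, List.cons_append]

lemma towerDist_reverse_hanoiMove_le {i j : Fin 3} (hij : i ≠ j) (w : List (Fin 3)) (q : Fin 3) :
    towerDist q w.reverse ≤ towerDist q (hanoiMove i j w).reverse + 1 := by
  rcases hanoiMove_eq_self_or hij w with h | ⟨a, b, m, u, hab, hk, hw, hm⟩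
  · rw [h]; omega
  · have hrev : ∀ c : Fin 3, (List.replicate m (thirdPeg i j) ++ c :: u).reverse =
        u.reverse ++ c :: List.replicate m (thirdPeg a b) := by
      intro c; simp [hk]
    rw [hm, hw, hrev, hrev]
    exact towerDist_append_le (by simp) (towerDist_cons_replicate_le m hab) u.reverse q

lemma hanoiMove_hanoiMove {i j : Fin 3} (hij : i ≠ j) (w : List (Fin 3)) :
    hanoiMove i j (hanoiMove i j w) = w := by
  induction w with
  | nil => rfl
  | cons x w ih => by_cases hi : x = i <;> by_cases hj : x = j <;> simp_all [hanoiMove, hij.symm]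

lemma towerDist_le_of_adj {n : ℕ} {x y : List.Vector (Fin 3) n} (h : (hanoiGraph n).Adj x y)
    (q : Fin 3) : towerDist q x.toList.reverse ≤ towerDist q y.toList.reverse + 1 := by
  obtain ⟨-, s, hs, hxy⟩ := h
  obtain ⟨i, j, hij, rfl⟩ : ∃ i j : Fin 3, i ≠ j ∧ s = hanoiMove i j := by
    simp only [List.mem_cons, List.not_mem_nil, or_false] at hs
    rcases hs with rfl | rfl | rfl <;> exact ⟨_, _, by decide, rfl⟩
  rcases hxy with hxy | hxy
  · rw [← hxy]
    exact towerDist_reverse_hanoiMove_le hij _ q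
  · have := towerDist_reverse_hanoiMove_le hij (hanoiMove i j y.toList) q
    rwa [hanoiMove_hanoiMove hij, hxy] at this

lemma towerDist_le_add_length {n : ℕ} (q : Fin 3) {x y : List.Vector (Fin 3) n}
    (p : (hanoiGraph n).Walk x y) :
    towerDist q x.toList.reverse ≤ towerDist q y.toList.reverse + p.length := by
  induction p with
  | nil => simp
  | cons h p ih =>
    have := towerDist_le_of_adj h q
    rw [SimpleGraph.Walk.length_cons]
    omega

lemma hanoiGraph_adj_of_toList_eq {n m : ℕ} {a b : Fin 3} (hab : a ≠ b) (u : List (Fin 3))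
    {x y : List.Vector (Fin 3) n} (hx : x.toList = List.replicate m (thirdPeg a b) ++ a :: u)
    (hy : y.toList = List.replicate m (thirdPeg a b) ++ b :: u) : (hanoiGraph n).Adj x y := by
  refine ⟨fun hxy => hab ?_, hanoiMove a b, hanoiMove_mem_generators hab, Or.inl ?_⟩
  · rw [hxy, hy, List.append_cancel_left_eq, List.cons.injEq] at hx
    exact hx.1.symm
  · rw [hx, hy, hanoiMove_replicate_append hab]

/-- Words agreeing beyond their first `m` letters are joined by the classical recursive
solution: park the smaller disks on the third peg, move disk `m + 1`, rebuild. -/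
lemma exists_walk_length_le_of_drop_eq {n : ℕ} (m : ℕ) (x y : List.Vector (Fin 3) n)
    (h : x.toList.drop m = y.toList.drop m) :
    ∃ p : (hanoiGraph n).Walk x y, p.length ≤ 2 ^ m - 1 := by
  induction m generalizing x y with
  | zero => exact ⟨.copy .nil rfl (List.Vector.eq _ _ (by simpa using h)), by simp⟩
  | succ m ih =>
    have := Nat.one_le_two_pow (n := m)
    by_cases hm : x.toList.drop m = y.toList.drop m
    · obtain ⟨p, hp⟩ := ih x y hm
      exact ⟨p, hp.trans (by rw [pow_succ]; omega)⟩
    have hmn : m < n := by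
      by_contra! hnm
      exact hm (by simp [List.drop_eq_nil_of_le, hnm])
    obtain ⟨a, hx⟩ : ∃ a, x.toList.drop m = a :: x.toList.drop (m + 1) :=
      ⟨_, List.drop_eq_getElem_cons (by simpa using hmn)⟩
    obtain ⟨b, hy⟩ : ∃ b, y.toList.drop m = b :: y.toList.drop (m + 1) :=
      ⟨_, List.drop_eq_getElem_cons (by simpa using hmn)⟩
    have hab : a ≠ b := fun hab => hm (by rw [hx, hy, hab, h])
    have hlen : ∀ c : Fin 3,
        (List.replicate m (thirdPeg a b) ++ c :: x.toList.drop (m + 1)).length = n := by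
      intro c; simp; omega
    set z₁ : List.Vector (Fin 3) n := ⟨_, hlen a⟩
    set z₂ : List.Vector (Fin 3) n := ⟨_, hlen b⟩
    have hdrop : ∀ c : Fin 3,
        (List.replicate m (thirdPeg a b) ++ c :: x.toList.drop (m + 1)).drop m =
          c :: x.toList.drop (m + 1) :=
      fun c => List.drop_left' List.length_replicate
    obtain ⟨p₁, hp₁⟩ := ih x z₁ (by rw [hx]; exact (hdrop a).symm)
    obtain ⟨p₂, hp₂⟩ := ih z₂ y (by rw [hy, ← h]; exact hdrop b)
    refine ⟨p₁.append (.cons (hanoiGraph_adj_of_toList_eq hab _ rfl rfl) p₂), ?_⟩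
    rw [SimpleGraph.Walk.length_append, SimpleGraph.Walk.length_cons, pow_succ]
    omega

lemma exists_walk_length_le {n : ℕ} (x y : List.Vector (Fin 3) n) :
    ∃ p : (hanoiGraph n).Walk x y, p.length ≤ 2 ^ n - 1 :=
  exists_walk_length_le_of_drop_eq n x y (by simp [List.drop_eq_nil_of_le])

lemma hanoiGraph_dist_le {n : ℕ} (x y : List.Vector (Fin 3) n) :
    (hanoiGraph n).dist x y ≤ 2 ^ n - 1 :=
  let ⟨p, hp⟩ := exists_walk_length_le x y
  (SimpleGraph.dist_le p).trans hp

lemma towerDist_le_add_dist {n : ℕ} (q : Fin 3) (x y : List.Vector (Fin 3) n) :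
    towerDist q x.toList.reverse ≤ towerDist q y.toList.reverse + (hanoiGraph n).dist x y := by
  obtain ⟨p, -⟩ := exists_walk_length_le x y
  obtain ⟨p', hp'⟩ := p.reachable.exists_walk_length_eq_dist
  exact hp' ▸ towerDist_le_add_length q p'

lemma card_filter_towerDist_eq {m : ℕ} (P : ℕ → Prop) [DecidablePred P] (p r : Fin 3) :
    (Finset.univ.filter fun u : List.Vector (Fin 3) m => P (towerDist r u.toList)).card =
      (Finset.univ.filter fun u : List.Vector (Fin 3) m => P (towerDist p u.toList)).card := by
  have hσ : ∀ u : List.Vector (Fin 3) m,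
      (u.map (Equiv.swap r p)).map (Equiv.swap r p) = u := fun u => by
    simp only [List.Vector.map_map, Equiv.swap_apply_self]; exact List.Vector.map_id u
  refine Finset.card_nbij' (List.Vector.map (Equiv.swap r p)) (List.Vector.map (Equiv.swap r p))
    ?_ ?_ (fun u _ => hσ u) (fun u _ => hσ u)
  · intro u hu
    have := towerDist_perm (Equiv.swap r p) r u.toList
    rw [Equiv.swap_apply_left] at this
    simpa [this] using hu
  · intro u hu
    have := towerDist_perm (Equiv.swap r p) p u.toList
    rw [Equiv.swap_apply_right] at this
    simpa [this] using hu

lemma List.Vector.toList_reverse_eq_cons {α : Type*} {m : ℕ} (x : List.Vector α (m + 1)) :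
    x.toList.reverse = x.reverse.head :: x.reverse.tail.toList := by
  rw [← List.Vector.toList_reverse, ← List.Vector.toList_cons, List.Vector.cons_head_tail]

lemma card_filter_head_reverse_le {α : Type*} [DecidableEq α] {m : ℕ}
    {A : Finset (List.Vector α (m + 1))} {B : Finset (List.Vector α m)} {t : α}
    (h : ∀ x ∈ A, x.reverse.head = t → x.reverse.tail ∈ B) :
    (A.filter fun x => x.reverse.head = t).card ≤ B.card := by
  refine Finset.card_le_card_of_injOn (fun x => x.reverse.tail) ?_ ?_
  · intro x hx
    simp only [Finset.coe_filter, Set.mem_ofPred_eq] at hx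
    exact h x hx.1 hx.2
  · intro x hx y hy hxy
    simp only [Finset.coe_filter, Set.mem_ofPred_eq] at hx hy
    rw [← List.Vector.reverse_reverse (v := x), ← List.Vector.reverse_reverse (v := y),
      ← List.Vector.cons_head_tail x.reverse, ← List.Vector.cons_head_tail y.reverse, hx.2, hy.2]
    exact congrArg _ (congrArg _ hxy)

lemma card_lt_of_forall_dist_lt {m : ℕ} (A : Finset (List.Vector (Fin 3) (m + 1)))
    (hA : ∀ x ∈ A, ∀ y ∈ A, (hanoiGraph (m + 1)).dist x y < 2 ^ m) :
    A.card < 2 * 3 ^ m := by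
  classical
  rcases A.eq_empty_or_nonempty with rfl | hne
  · simp
  obtain ⟨v, hv⟩ := hne
  set p := v.reverse.head
  obtain ⟨x₀, hx₀, hmin⟩ := A.exists_min_image (fun x => towerDist p x.toList.reverse) ⟨v, hv⟩
  set L := towerDist p x₀.toList.reverse
  set S := Finset.univ.filter fun u : List.Vector (Fin 3) m => L ≤ towerDist p u.toList
  set T := fun r => Finset.univ.filter fun u : List.Vector (Fin 3) m => towerDist r u.toList < L
  have hS : 1 ≤ S.card := by
    refine Finset.card_pos.mpr ⟨v.reverse.tail, ?_⟩
    have := hmin v hv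
    rw [v.toList_reverse_eq_cons, towerDist, if_pos rfl] at this
    simpa [S] using this
  have hST : S.card + (T p).card = 3 ^ m := by
    simpa [S, T, not_le, card_vector] using
      Finset.card_filter_add_card_filter_not (s := Finset.univ)
        (fun u : List.Vector (Fin 3) m => L ≤ towerDist p u.toList)
  have hfiber_p : (A.filter fun x => x.reverse.head = p).card ≤ S.card := by
    refine card_filter_head_reverse_le fun x hx ht => ?_
    have := hmin x hx
    rw [x.toList_reverse_eq_cons, ht, towerDist, if_pos rfl] at this
    simpa [S] using this
  have hfiber {t : Fin 3} (ht : t ≠ p) :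
      (A.filter fun x => x.reverse.head = t).card ≤ (T p).card := by
    refine (card_filter_head_reverse_le (B := T (thirdPeg t p)) fun x hx hxt => ?_).trans
      (card_filter_towerDist_eq (· < L) p (thirdPeg t p)).le
    have hdist := (towerDist_le_add_dist p x x₀).trans_lt
      (Nat.add_lt_add_left (hA x hx x₀ hx₀) L)
    rw [x.toList_reverse_eq_cons, hxt, towerDist, if_neg ht, List.Vector.toList_length] at hdist
    simp only [Nat.add_sub_cancel] at hdist
    simp only [T, Finset.mem_filter, Finset.mem_univ, true_and]
    omega
  calc A.card = ∑ t, (A.filter fun x => x.reverse.head = t).card :=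
        Finset.card_eq_sum_card_fiberwise fun _ _ => Finset.mem_univ _
    _ = (A.filter fun x => x.reverse.head = p).card +
          ∑ t ∈ Finset.univ.erase p, (A.filter fun x => x.reverse.head = t).card :=
        (Finset.add_sum_erase _ _ (Finset.mem_univ p)).symm
    _ ≤ S.card + ∑ t ∈ Finset.univ.erase p, (T p).card :=
        add_le_add hfiber_p (Finset.sum_le_sum fun t ht => hfiber (Finset.ne_of_mem_erase ht))
    _ = S.card + 2 * (T p).card := by simp [Finset.card_erase_of_mem]
    _ < 2 * 3 ^ m := by omega

/-- Theorem 10: the Hanoi Schreier graphs `Γ_n` satisfy `ρ_{2/3}(Γ_n) ≥ 1/2`: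
every `A ⊆ V_n` with `3|A| ≥ 2·3^n = 2|V_n|` has `2·δ(A) ≥ δ(Γ_n)`. -/
theorem statement_13 (n : ℕ) (hn : 1 ≤ n)
    (A : Finset (List.Vector (Fin 3) n)) (hA : 2 * 3 ^ n ≤ 3 * A.card) :
    Finset.univ.sup
        (fun pq : List.Vector (Fin 3) n × List.Vector (Fin 3) n =>
          (hanoiGraph n).dist pq.1 pq.2) ≤
      2 * (A ×ˢ A).sup
        (fun pq : List.Vector (Fin 3) n × List.Vector (Fin 3) n =>
          (hanoiGraph n).dist pq.1 pq.2) := by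
  obtain ⟨m, rfl⟩ : ∃ m, n = m + 1 := ⟨n - 1, by omega⟩
  obtain ⟨x, hx, y, hy, hxy⟩ : ∃ x ∈ A, ∃ y ∈ A, 2 ^ m ≤ (hanoiGraph (m + 1)).dist x y := by
    by_contra! hsmall
    have := card_lt_of_forall_dist_lt A hsmall
    rw [pow_succ] at hA
    omega
  have hdiam := Finset.sup_le fun (pq : List.Vector (Fin 3) (m + 1) × _) (_ : pq ∈ Finset.univ) =>
    hanoiGraph_dist_le pq.1 pq.2
  have hwide := hxy.trans (Finset.le_sup (f := fun pq : List.Vector (Fin 3) (m + 1) × _ =>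
    (hanoiGraph (m + 1)).dist pq.1 pq.2) (b := (x, y)) (Finset.mem_product.mpr ⟨hx, hy⟩))
  rw [pow_succ] at hdiam
  omega
end
end
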